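/- arXiv:1108.4803 — 9 statements merged into one kernel-verified Lean document; each statement's English description precedes it below -/
import Mathlib

section
/- Let X be a real random variable with E[X] = 0, E[X^2] = sigma^2 > 0, and E[X^4] <= c * (E[X^2])^2 for some constant c > 0. Then P(X > sigma/(2*sqrt(c))) > 0. -/
/-!
If `X ≤ a := σ / (2√c)` almost surely, then `E X⁺ ≤ a`, and since `E X = 0` also `E X⁻ ≤ a`.
Moreover `E X² ≤ a E X⁺ + E (X⁻)² ≤ a² + E (X⁻)²`, so the negative part carries most of the
second moment: `E (X⁻)² ≥ σ² - a² ≥ 3σ²/4`, using `c ≥ 1` (Jensen for `X²`).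
Two applications of Cauchy–Schwarz give the moment interpolation
`(E (X⁻)²)³ ≤ (E X⁻)² E (X⁻)⁴ ≤ a² c σ⁴ = σ⁶/4`, which contradicts `(3/4)³ > 1/4`.
-/

open MeasureTheory ProbabilityTheory

theorem pow_three_le_sq_mul_of_sq_le_mul {s u t v : ℝ} (hs : 0 ≤ s) (hv : 0 ≤ v)
    (hst : s ^ 2 ≤ u * t) (hts : t ^ 2 ≤ s * v) : s ^ 3 ≤ u ^ 2 * v := by
  have h : s * s ^ 3 ≤ s * (u ^ 2 * v) :=
    calc s * s ^ 3 = (s ^ 2) ^ 2 := by ring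
      _ ≤ (u * t) ^ 2 := pow_le_pow_left₀ (by positivity) hst 2
      _ = u ^ 2 * t ^ 2 := by ring
      _ ≤ u ^ 2 * (s * v) := by gcongr
      _ = s * (u ^ 2 * v) := by ring
  rcases hs.eq_or_lt with rfl | hs_pos
  · norm_num; positivity
  · exact le_of_mul_le_mul_left h hs_pos

theorem pow_le_add_pow {x : ℝ} (hx : 0 ≤ x) {n m : ℕ} (hn : n ≠ 0) (hnm : n ≤ m) :
    x ^ n ≤ x + x ^ m := by
  rcases le_total x 1 with h | h
  · linarith [pow_le_of_le_one hx h hn, pow_nonneg hx m]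
  · linarith [pow_le_pow_right₀ h hnm]

theorem negPart_pow_le_of_even {n : ℕ} (hn : Even n) (x : ℝ) : x⁻ ^ n ≤ x ^ n := by
  rw [← hn.pow_abs x]
  exact pow_le_pow_left₀ (negPart_nonneg x) (max_le (neg_le_abs x) (abs_nonneg x)) n

section Moments

variable {Ω : Type*} [MeasurableSpace Ω] {μ : Measure Ω}

theorem sq_integral_le_integral_sq [IsProbabilityMeasure μ] {f : Ω → ℝ} (hf : MemLp f 2 μ) :
    (∫ ω, f ω ∂μ) ^ 2 ≤ ∫ ω, f ω ^ 2 ∂μ := by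
  have h := variance_nonneg f μ
  rw [variance_eq_sub hf] at h
  simpa [sub_nonneg] using h

theorem one_le_of_integral_pow_four_le [IsProbabilityMeasure μ] {X : Ω → ℝ} {c : ℝ}
    (hX : AEStronglyMeasurable X μ) (h4 : Integrable (fun ω => X ω ^ 4) μ)
    (h2 : 0 < ∫ ω, X ω ^ 2 ∂μ) (hE4 : ∫ ω, X ω ^ 4 ∂μ ≤ c * (∫ ω, X ω ^ 2 ∂μ) ^ 2) : 1 ≤ c := by
  have sq_sq : ∀ ω, (X ω ^ 2) ^ 2 = X ω ^ 4 := fun ω => by ring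
  have hX2 : MemLp (fun ω => X ω ^ 2) 2 μ :=
    (memLp_two_iff_integrable_sq (f := fun ω => X ω ^ 2) (hX.pow 2)).2
      (by simpa only [sq_sq] using h4)
  have h := sq_integral_le_integral_sq hX2
  simp only [sq_sq] at h
  nlinarith [pow_pos h2 2]

theorem sq_integral_mul_le_integral_sq_mul_integral_sq {f g : Ω → ℝ} (hf : 0 ≤ f) (hg : 0 ≤ g)
    (hf2 : MemLp f 2 μ) (hg2 : MemLp g 2 μ) :
    (∫ ω, f ω * g ω ∂μ) ^ 2 ≤ (∫ ω, f ω ^ 2 ∂μ) * ∫ ω, g ω ^ 2 ∂μ := by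
  have hholder := integral_mul_le_Lp_mul_Lq_of_nonneg (p := 2) (q := 2)
    (by constructor <;> norm_num)
    (.of_forall hf) (.of_forall hg) (by simpa using hf2) (by simpa using hg2)
  simp only [Real.rpow_two, ← Real.sqrt_eq_rpow] at hholder
  calc (∫ ω, f ω * g ω ∂μ) ^ 2
      ≤ (√(∫ ω, f ω ^ 2 ∂μ) * √(∫ ω, g ω ^ 2 ∂μ)) ^ 2 :=
        pow_le_pow_left₀ (integral_nonneg fun ω => mul_nonneg (hf ω) (hg ω)) hholder 2
    _ = (∫ ω, f ω ^ 2 ∂μ) * ∫ ω, g ω ^ 2 ∂μ := by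
        rw [mul_pow, Real.sq_sqrt (integral_nonneg fun ω => sq_nonneg _),
          Real.sq_sqrt (integral_nonneg fun ω => sq_nonneg _)]

theorem MeasureTheory.Integrable.pow_of_integrable_pow {f : Ω → ℝ} (hf : 0 ≤ f)
    (hf1 : Integrable f μ) {n m : ℕ} (hfm : Integrable (fun ω => f ω ^ m) μ) (hn : n ≠ 0)
    (hnm : n ≤ m) :
    Integrable (fun ω => f ω ^ n) μ :=
  (hf1.add hfm).mono' (hf1.aestronglyMeasurable.pow n) <| .of_forall fun ω => by
    rw [Real.norm_of_nonneg (pow_nonneg (hf ω) n)]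
    exact pow_le_add_pow (hf ω) hn hnm

theorem MeasureTheory.Integrable.negPart_pow_of_even {X : Ω → ℝ} {n : ℕ} (hn : Even n)
    (hX : Integrable X μ) (hXn : Integrable (fun ω => X ω ^ n) μ) :
    Integrable (fun ω => (X ω)⁻ ^ n) μ :=
  hXn.mono' (hX.neg_part.aestronglyMeasurable.pow n) <| .of_forall fun ω => by
    rw [Real.norm_of_nonneg (pow_nonneg (negPart_nonneg _) n)]
    exact negPart_pow_le_of_even hn (X ω)

theorem integral_sq_pow_three_le {f : Ω → ℝ} (hf : 0 ≤ f) (hf1 : Integrable f μ)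
    (hf4 : Integrable (fun ω => f ω ^ 4) μ) :
    (∫ ω, f ω ^ 2 ∂μ) ^ 3 ≤ (∫ ω, f ω ∂μ) ^ 2 * ∫ ω, f ω ^ 4 ∂μ := by
  have hmeas := hf1.aestronglyMeasurable
  have hf2 := hf1.pow_of_integrable_pow hf hf4 two_ne_zero (by norm_num)
  have hf3 := hf1.pow_of_integrable_pow hf hf4 three_ne_zero (by norm_num)
  have hsqrt : ∀ ω, √(f ω) ^ 2 = f ω := fun ω => Real.sq_sqrt (hf ω)
  have hsqrt_meas := Real.continuous_sqrt.comp_aestronglyMeasurable hmeas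
  have mul_sqrt_sq : ∀ ω, (f ω * √(f ω)) ^ 2 = f ω ^ 3 := fun ω => by
    rw [mul_pow, hsqrt]; ring
  have h2 : (∫ ω, f ω ^ 2 ∂μ) ^ 2 ≤ (∫ ω, f ω ∂μ) * ∫ ω, f ω ^ 3 ∂μ := by
    have cs := sq_integral_mul_le_integral_sq_mul_integral_sq (μ := μ)
      (fun ω => Real.sqrt_nonneg (f ω)) (fun ω => mul_nonneg (hf ω) (Real.sqrt_nonneg (f ω)))
      ((memLp_two_iff_integrable_sq hsqrt_meas).2 (by simpa only [hsqrt] using hf1))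
      ((memLp_two_iff_integrable_sq (f := fun ω => f ω * √(f ω)) (hmeas.mul hsqrt_meas)).2
        (by simpa only [mul_sqrt_sq] using hf3))
    have sqrt_mul : ∀ ω, √(f ω) * (f ω * √(f ω)) = f ω ^ 2 := fun ω => by
      rw [mul_left_comm, ← sq, hsqrt, sq]
    simpa only [sqrt_mul, hsqrt, mul_sqrt_sq] using cs
  have h3 : (∫ ω, f ω ^ 3 ∂μ) ^ 2 ≤ (∫ ω, f ω ^ 2 ∂μ) * ∫ ω, f ω ^ 4 ∂μ := by
    have cs := sq_integral_mul_le_integral_sq_mul_integral_sq (μ := μ) hf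
      (fun ω => sq_nonneg (f ω)) ((memLp_two_iff_integrable_sq hmeas).2 hf2)
      ((memLp_two_iff_integrable_sq (f := fun ω => f ω ^ 2) (hmeas.pow 2)).2
        (by simpa only [← pow_mul] using hf4))
    have e3 : ∀ ω, f ω * f ω ^ 2 = f ω ^ 3 := fun ω => by ring
    have e4 : ∀ ω, (f ω ^ 2) ^ 2 = f ω ^ 4 := fun ω => by ring
    simpa only [e3, e4] using cs
  exact pow_three_le_sq_mul_of_sq_le_mul (integral_nonneg fun ω => sq_nonneg _)
    (integral_nonneg fun ω => pow_nonneg (hf ω) 4) h2 h3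

theorem integral_posPart_eq_integral_negPart {X : Ω → ℝ} (hX : Integrable X μ)
    (hE : ∫ ω, X ω ∂μ = 0) : ∫ ω, (X ω)⁺ ∂μ = ∫ ω, (X ω)⁻ ∂μ := by
  have hpos : Integrable (fun ω => (X ω)⁺) μ := hX.pos_part
  have hneg : Integrable (fun ω => (X ω)⁻) μ := hX.neg_part
  rw [← sub_eq_zero, ← integral_sub hpos hneg, ← hE]
  simp only [posPart_sub_negPart]

theorem integral_negPart_le_of_ae_le [IsProbabilityMeasure μ] {X : Ω → ℝ} {a : ℝ} (ha : 0 ≤ a)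
    (hX : Integrable X μ) (hE : ∫ ω, X ω ∂μ = 0) (hle : ∀ᵐ ω ∂μ, X ω ≤ a) :
    ∫ ω, (X ω)⁻ ∂μ ≤ a := by
  rw [← integral_posPart_eq_integral_negPart hX hE]
  calc ∫ ω, (X ω)⁺ ∂μ ≤ ∫ _, a ∂μ :=
        integral_mono_ae hX.pos_part (integrable_const a) <| hle.mono fun ω h => max_le h ha
    _ = a := by simp

theorem integral_sq_le_sq_add_integral_negPart_sq [IsProbabilityMeasure μ] {X : Ω → ℝ} {a : ℝ}
    (ha : 0 ≤ a) (hX : Integrable X μ) (hX2 : Integrable (fun ω => X ω ^ 2) μ)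
    (hE : ∫ ω, X ω ∂μ = 0) (hle : ∀ᵐ ω ∂μ, X ω ≤ a) :
    ∫ ω, X ω ^ 2 ∂μ ≤ a ^ 2 + ∫ ω, (X ω)⁻ ^ 2 ∂μ := by
  have hpos : Integrable (fun ω => a * (X ω)⁺) μ := hX.pos_part.const_mul a
  have hneg2 : Integrable (fun ω => (X ω)⁻ ^ 2) μ := hX.negPart_pow_of_even even_two hX2
  have pointwise : ∀ᵐ ω ∂μ, X ω ^ 2 ≤ a * (X ω)⁺ + (X ω)⁻ ^ 2 := hle.mono fun ω h => by
    rcases le_total 0 (X ω) with h0 | h0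
    · rw [posPart_eq_self.2 h0, negPart_eq_zero.2 h0]; nlinarith
    · rw [posPart_eq_zero.2 h0, negPart_eq_neg.2 h0]; simp
  calc ∫ ω, X ω ^ 2 ∂μ ≤ ∫ ω, (a * (X ω)⁺ + (X ω)⁻ ^ 2) ∂μ :=
        integral_mono_ae hX2 (hpos.add hneg2) pointwise
    _ = a * ∫ ω, (X ω)⁻ ∂μ + ∫ ω, (X ω)⁻ ^ 2 ∂μ := by
        rw [integral_add hpos hneg2, integral_const_mul,
          integral_posPart_eq_integral_negPart hX hE]
    _ ≤ a * a + ∫ ω, (X ω)⁻ ^ 2 ∂μ := by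
        gcongr
        exact integral_negPart_le_of_ae_le ha hX hE hle
    _ = a ^ 2 + ∫ ω, (X ω)⁻ ^ 2 ∂μ := by ring

end Moments

theorem stmt2_general {Ω : Type*} [MeasurableSpace Ω] (μ : Measure Ω) [IsProbabilityMeasure μ]
    (X : Ω → ℝ) (c σ : ℝ) (hσ : 0 < σ)
    (h1 : Integrable X μ)
    (h2 : Integrable (fun ω => (X ω) ^ 2) μ)
    (h4 : Integrable (fun ω => (X ω) ^ 4) μ)
    (hE : ∫ ω, X ω ∂μ = 0)
    (hE2 : ∫ ω, (X ω) ^ 2 ∂μ = σ ^ 2)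
    (hE4 : ∫ ω, (X ω) ^ 4 ∂μ ≤ c * (∫ ω, (X ω) ^ 2 ∂μ) ^ 2) :
    0 < μ {ω | σ / (2 * Real.sqrt c) < X ω} := by
  have hc : 1 ≤ c :=
    one_le_of_integral_pow_four_le h1.aestronglyMeasurable h4 (hE2 ▸ by positivity) hE4
  set a := σ / (2 * Real.sqrt c)
  have ha : 0 < a := by have := Real.sqrt_pos.2 (zero_lt_one.trans_le hc); positivity
  have ha_sq : a ^ 2 * (4 * c) = σ ^ 2 := by
    rw [div_pow, mul_pow, Real.sq_sqrt (zero_le_one.trans hc)]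
    field_simp
    ring
  by_contra hnull
  have hle : ∀ᵐ ω ∂μ, X ω ≤ a := by
    rw [not_lt, nonpos_iff_eq_zero] at hnull
    simpa [ae_iff] using hnull
  have hu := integral_negPart_le_of_ae_le ha.le h1 hE hle
  have hs := integral_sq_le_sq_add_integral_negPart_sq ha.le h1 h2 hE hle
  have hY4 : Integrable (fun ω => (X ω)⁻ ^ 4) μ := h1.negPart_pow_of_even (by decide) h4
  have hv : ∫ ω, (X ω)⁻ ^ 4 ∂μ ≤ c * σ ^ 4 :=
    calc _ ≤ ∫ ω, X ω ^ 4 ∂μ :=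
          integral_mono hY4 h4 fun ω => negPart_pow_le_of_even (by decide) (X ω)
      _ ≤ c * σ ^ 4 := by rwa [hE2, ← pow_mul] at hE4
  have lower : 3 * σ ^ 2 / 4 ≤ ∫ ω, (X ω)⁻ ^ 2 ∂μ := by nlinarith
  have upper : (∫ ω, (X ω)⁻ ^ 2 ∂μ) ^ 3 ≤ σ ^ 6 / 4 :=
    calc _ ≤ (∫ ω, (X ω)⁻ ∂μ) ^ 2 * ∫ ω, (X ω)⁻ ^ 4 ∂μ :=
          integral_sq_pow_three_le (fun ω => negPart_nonneg (X ω)) h1.neg_part hY4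
      _ ≤ a ^ 2 * (c * σ ^ 4) := by gcongr
      _ = σ ^ 6 / 4 := by linear_combination σ ^ 4 / 4 * ha_sq
  nlinarith [pow_le_pow_left₀ (by positivity) lower 3, pow_pos hσ 6]

theorem stmt2 {Ω : Type*} [MeasurableSpace Ω] (μ : Measure Ω) [IsProbabilityMeasure μ]
    (X : Ω → ℝ) (hX : Measurable X) (c σ : ℝ) (hc : 0 < c) (hσ : 0 < σ)
    (h1 : Integrable X μ)
    (h2 : Integrable (fun ω => (X ω) ^ 2) μ)
    (h4 : Integrable (fun ω => (X ω) ^ 4) μ)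
    (hE : ∫ ω, X ω ∂μ = 0)
    (hE2 : ∫ ω, (X ω) ^ 2 ∂μ = σ ^ 2)
    (hE4 : ∫ ω, (X ω) ^ 4 ∂μ ≤ c * (∫ ω, (X ω) ^ 2 ∂μ) ^ 2) :
    0 < μ {ω | σ / (2 * Real.sqrt c) < X ω} :=
  stmt2_general μ X c σ hσ h1 h2 h4 hE hE2 hE4
end

section
/- Let f(x_1,...,x_n) = sum over subsets I of [n] of c_I * prod_{i in I} x_i be a multilinear polynomial over {-1,1}^n of degree at most r (i.e., c_I = 0 whenever |I| > r). If X = f(eps_1,...,eps_n) with eps_i independent uniform on {-1,1}, then E[X^4] <= 9^r * (E[X^2])^2. -/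
open Finset

private lemma bonami_key {ι : Type*} [DecidableEq ι] (s : Finset ι) :
    ∀ (r : ℕ) (c : Finset ι → ℝ),
      (∀ I ∈ s.powerset, r < I.card → c I = 0) →
      (2 : ℝ) ^ s.card *
          ∑ T ∈ s.powerset,
            (∑ I ∈ s.powerset, c I * ∏ i ∈ I, (if i ∈ T then (1 : ℝ) else -1)) ^ 4
        ≤ 9 ^ r *
          (∑ T ∈ s.powerset,
            (∑ I ∈ s.powerset, c I * ∏ i ∈ I, (if i ∈ T then (1 : ℝ) else -1)) ^ 2) ^ 2 := by
  induction s using Finset.cons_induction with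
  | empty =>
      intro r c _
      have h9 : (1:ℝ) ≤ 9 ^ r := one_le_pow₀ (by norm_num)
      simp only [Finset.powerset_empty, Finset.sum_singleton, Finset.card_empty, pow_zero,
        one_mul, Finset.prod_empty, mul_one]
      nlinarith [sq_nonneg (c ∅), sq_nonneg (c ∅ ^ 2)]
  | cons a s ha ih =>
      intro r c hdeg
      rw [Finset.cons_eq_insert] at hdeg ⊢
      set G : Finset ι → ℝ :=
        fun T => ∑ J ∈ s.powerset, c J * ∏ i ∈ J, (if i ∈ T then (1 : ℝ) else -1) with hGdef
      set H : Finset ι → ℝ :=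
        fun T => ∑ J ∈ s.powerset, c (insert a J) * ∏ i ∈ J, (if i ∈ T then (1 : ℝ) else -1)
        with hHdef
      have hnotmem : ∀ J ∈ s.powerset, a ∉ J := fun J hJ h =>
        ha ((Finset.mem_powerset.mp hJ) h)
      -- value of the full sum on T (with a ∉ T) and on insert a T
      have hFT : ∀ T ∈ s.powerset,
          (∑ I ∈ (insert a s).powerset, c I * ∏ i ∈ I, (if i ∈ T then (1 : ℝ) else -1))
            = G T - H T := by
        intro T hT
        have haT : a ∉ T := hnotmem T hT
        rw [Finset.sum_powerset_insert ha]
        have h2 : ∑ J ∈ s.powerset,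
            c (insert a J) * ∏ i ∈ insert a J, (if i ∈ T then (1 : ℝ) else -1) = -H T := by
          rw [hHdef, ← Finset.sum_neg_distrib]
          refine Finset.sum_congr rfl fun J hJ => ?_
          rw [Finset.prod_insert (hnotmem J hJ), if_neg haT]
          ring
        rw [h2]; ring
      have hprodins : ∀ (T : Finset ι), ∀ J ∈ s.powerset,
          (∏ i ∈ J, (if i ∈ insert a T then (1 : ℝ) else -1))
            = ∏ i ∈ J, (if i ∈ T then (1 : ℝ) else -1) := by
        intro T J hJ
        refine Finset.prod_congr rfl fun i hi => ?_
        have hia : i ≠ a := fun h => hnotmem J hJ (h ▸ hi)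
        simp [Finset.mem_insert, hia]
      have hFT' : ∀ T ∈ s.powerset,
          (∑ I ∈ (insert a s).powerset, c I * ∏ i ∈ I, (if i ∈ insert a T then (1 : ℝ) else -1))
            = G T + H T := by
        intro T hT
        rw [Finset.sum_powerset_insert ha]
        have h1 : ∑ J ∈ s.powerset,
            c J * ∏ i ∈ J, (if i ∈ insert a T then (1 : ℝ) else -1) = G T :=
          Finset.sum_congr rfl fun J hJ => by rw [hprodins T J hJ]
        have h2 : ∑ J ∈ s.powerset,
            c (insert a J) * ∏ i ∈ insert a J, (if i ∈ insert a T then (1 : ℝ) else -1)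
              = H T := by
          rw [hHdef]
          refine Finset.sum_congr rfl fun J hJ => ?_
          rw [Finset.prod_insert (hnotmem J hJ), if_pos (Finset.mem_insert_self a T),
            hprodins T J hJ]
          ring
        rw [h1, h2]
      set A4 : ℝ := ∑ T ∈ s.powerset, G T ^ 4 with hA4def
      set A2 : ℝ := ∑ T ∈ s.powerset, G T ^ 2 with hA2def
      set B4 : ℝ := ∑ T ∈ s.powerset, H T ^ 4 with hB4def
      set B2 : ℝ := ∑ T ∈ s.powerset, H T ^ 2 with hB2def
      set C : ℝ := ∑ T ∈ s.powerset, G T ^ 2 * H T ^ 2 with hCdef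
      have e4 : ∑ T ∈ (insert a s).powerset,
          (∑ I ∈ (insert a s).powerset, c I * ∏ i ∈ I, (if i ∈ T then (1 : ℝ) else -1)) ^ 4
            = 2 * A4 + 12 * C + 2 * B4 := by
        rw [Finset.sum_powerset_insert ha]
        have h1 : ∑ T ∈ s.powerset,
            (∑ I ∈ (insert a s).powerset, c I * ∏ i ∈ I, (if i ∈ T then (1 : ℝ) else -1)) ^ 4
              = ∑ T ∈ s.powerset, (G T - H T) ^ 4 :=
          Finset.sum_congr rfl fun T hT => by rw [hFT T hT]
        have h2 : ∑ T ∈ s.powerset,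
            (∑ I ∈ (insert a s).powerset,
                c I * ∏ i ∈ I, (if i ∈ insert a T then (1 : ℝ) else -1)) ^ 4
              = ∑ T ∈ s.powerset, (G T + H T) ^ 4 :=
          Finset.sum_congr rfl fun T hT => by rw [hFT' T hT]
        rw [h1, h2, ← Finset.sum_add_distrib]
        have h3 : ∑ T ∈ s.powerset, ((G T - H T) ^ 4 + (G T + H T) ^ 4)
            = ∑ T ∈ s.powerset, (2 * G T ^ 4 + 12 * (G T ^ 2 * H T ^ 2) + 2 * H T ^ 4) :=
          Finset.sum_congr rfl fun T _ => by ring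
        rw [h3, Finset.sum_add_distrib, Finset.sum_add_distrib, ← Finset.mul_sum,
          ← Finset.mul_sum, ← Finset.mul_sum]
      have e2 : ∑ T ∈ (insert a s).powerset,
          (∑ I ∈ (insert a s).powerset, c I * ∏ i ∈ I, (if i ∈ T then (1 : ℝ) else -1)) ^ 2
            = 2 * A2 + 2 * B2 := by
        rw [Finset.sum_powerset_insert ha]
        have h1 : ∑ T ∈ s.powerset,
            (∑ I ∈ (insert a s).powerset, c I * ∏ i ∈ I, (if i ∈ T then (1 : ℝ) else -1)) ^ 2
              = ∑ T ∈ s.powerset, (G T - H T) ^ 2 :=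
          Finset.sum_congr rfl fun T hT => by rw [hFT T hT]
        have h2 : ∑ T ∈ s.powerset,
            (∑ I ∈ (insert a s).powerset,
                c I * ∏ i ∈ I, (if i ∈ insert a T then (1 : ℝ) else -1)) ^ 2
              = ∑ T ∈ s.powerset, (G T + H T) ^ 2 :=
          Finset.sum_congr rfl fun T hT => by rw [hFT' T hT]
        rw [h1, h2, ← Finset.sum_add_distrib]
        have h3 : ∑ T ∈ s.powerset, ((G T - H T) ^ 2 + (G T + H T) ^ 2)
            = ∑ T ∈ s.powerset, (2 * G T ^ 2 + 2 * H T ^ 2) :=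
          Finset.sum_congr rfl fun T _ => by ring
        rw [h3, Finset.sum_add_distrib, ← Finset.mul_sum, ← Finset.mul_sum]
      rw [e4, e2, Finset.card_insert_of_notMem ha, pow_succ]
      -- induction hypotheses
      have hsub : ∀ I ∈ s.powerset, I ∈ (insert a s).powerset := fun I hI =>
        Finset.mem_powerset.mpr ((Finset.mem_powerset.mp hI).trans (Finset.subset_insert a s))
      have hA : (2 : ℝ) ^ s.card * A4 ≤ 9 ^ r * A2 ^ 2 :=
        ih r c fun I hI h => hdeg I (hsub I hI) h
      have hB : (2 : ℝ) ^ s.card * B4 ≤ 9 ^ r / 9 * B2 ^ 2 := by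
        have hcard : ∀ J ∈ s.powerset, (insert a J).card = J.card + 1 := fun J hJ =>
          Finset.card_insert_of_notMem (hnotmem J hJ)
        have hmemins : ∀ J ∈ s.powerset, insert a J ∈ (insert a s).powerset := fun J hJ =>
          Finset.mem_powerset.mpr
            (Finset.insert_subset_insert a (Finset.mem_powerset.mp hJ))
        match r with
        | 0 =>
            have hzero : ∀ J ∈ s.powerset, c (insert a J) = 0 := fun J hJ =>
              hdeg _ (hmemins J hJ) (by rw [hcard J hJ]; omega)
            have hH0 : ∀ T, H T = 0 := by
              intro T
              rw [hHdef]
              refine Finset.sum_eq_zero fun J hJ => by rw [hzero J hJ, zero_mul]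
            have hB40 : B4 = 0 := Finset.sum_eq_zero fun T _ => by rw [hH0 T]; norm_num
            have hB20 : B2 = 0 := Finset.sum_eq_zero fun T _ => by rw [hH0 T]; norm_num
            rw [hB40, hB20]; norm_num
        | r' + 1 =>
            have := ih r' (fun J => c (insert a J)) fun J hJ h =>
              hdeg _ (hmemins J hJ) (by rw [hcard J hJ]; omega)
            calc (2 : ℝ) ^ s.card * B4 ≤ 9 ^ r' * B2 ^ 2 := this
              _ = 9 ^ (r' + 1) / 9 * B2 ^ 2 := by rw [pow_succ]; ring
      have hCS : C ^ 2 ≤ A4 * B4 := by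
        have := Finset.sum_mul_sq_le_sq_mul_sq s.powerset (fun T => G T ^ 2) (fun T => H T ^ 2)
        simpa [hCdef, hA4def, hB4def, ← pow_mul] using this
      have hA2n : 0 ≤ A2 := Finset.sum_nonneg fun T _ => sq_nonneg _
      have hB2n : 0 ≤ B2 := Finset.sum_nonneg fun T _ => sq_nonneg _
      have hA4n : 0 ≤ A4 := Finset.sum_nonneg fun T _ => by positivity
      have hB4n : 0 ≤ B4 := Finset.sum_nonneg fun T _ => by positivity
      have hCn : 0 ≤ C := Finset.sum_nonneg fun T _ => by positivity
      have hp : (0 : ℝ) < 2 ^ s.card := by positivity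
      have hq : (0 : ℝ) < 9 ^ r := by positivity
      have hC : (2 : ℝ) ^ s.card * C ≤ 9 ^ r / 3 * (A2 * B2) := by
        have hsq : ((2 : ℝ) ^ s.card * C) ^ 2 ≤ (9 ^ r / 3 * (A2 * B2)) ^ 2 := by
          have h1 : ((2 : ℝ) ^ s.card * C) ^ 2 ≤ (2 ^ s.card * A4) * (2 ^ s.card * B4) := by
            have := mul_le_mul_of_nonneg_left hCS (le_of_lt (by positivity :
              (0:ℝ) < (2 ^ s.card) ^ 2))
            nlinarith [this]
          have h2 : ((2:ℝ) ^ s.card * A4) * (2 ^ s.card * B4)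
              ≤ (9 ^ r * A2 ^ 2) * (9 ^ r / 9 * B2 ^ 2) := by
            apply mul_le_mul hA hB (by positivity) (by positivity)
          calc ((2 : ℝ) ^ s.card * C) ^ 2 ≤ (9 ^ r * A2 ^ 2) * (9 ^ r / 9 * B2 ^ 2) :=
                le_trans h1 h2
            _ = (9 ^ r / 3 * (A2 * B2)) ^ 2 := by ring
        have hx : 0 ≤ (2:ℝ) ^ s.card * C := mul_nonneg hp.le hCn
        have hy : 0 ≤ 9 ^ r / 3 * (A2 * B2) :=
          mul_nonneg (by positivity) (mul_nonneg hA2n hB2n)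
        exact (pow_le_pow_iff_left₀ hx hy two_ne_zero).mp hsq
      clear_value A4 A2 B4 B2 C
      nlinarith [hA, hB, hC, mul_nonneg hq.le (sq_nonneg B2), mul_nonneg hq.le (sq_nonneg A2)]

theorem stmt4 (n r : ℕ) (c : Finset (Fin n) → ℝ)
    (hdeg : ∀ I : Finset (Fin n), r < I.card → c I = 0) :
    (1 / 2 ^ n : ℝ) *
      ∑ ε : Fin n → Bool,
        (∑ I : Finset (Fin n), c I * ∏ i ∈ I, (if ε i then (1 : ℝ) else -1)) ^ 4
    ≤ 9 ^ r *
      ((1 / 2 ^ n : ℝ) *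
        ∑ ε : Fin n → Bool,
          (∑ I : Finset (Fin n), c I * ∏ i ∈ I, (if ε i then (1 : ℝ) else -1)) ^ 2) ^ 2 := by
  have key := bonami_key (Finset.univ : Finset (Fin n)) r c
    (fun I _ h => hdeg I h)
  have etrans : ∀ (k : ℕ),
      (∑ ε : Fin n → Bool,
        (∑ I : Finset (Fin n), c I * ∏ i ∈ I, (if ε i then (1 : ℝ) else -1)) ^ k)
      = ∑ T ∈ (Finset.univ : Finset (Fin n)).powerset,
          (∑ I ∈ (Finset.univ : Finset (Fin n)).powerset,
            c I * ∏ i ∈ I, (if i ∈ T then (1 : ℝ) else -1)) ^ k := by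
    intro k
    rw [Finset.powerset_univ]
    refine Finset.sum_nbij' (i := fun ε => Finset.univ.filter (fun i => ε i))
      (j := fun T => fun i => decide (i ∈ T)) (by simp) (by simp) ?_ ?_ ?_
    · intro ε _; funext i; simp
    · intro T _; ext i; simp
    · intro ε _
      congr 1
      refine Finset.sum_congr rfl fun I _ => ?_
      congr 1
      refine Finset.prod_congr rfl fun i _ => ?_
      simp
  rw [etrans 4, etrans 2] at *
  rw [Finset.card_univ, Fintype.card_fin] at key
  set S4 : ℝ := ∑ T ∈ (Finset.univ : Finset (Fin n)).powerset,
      (∑ I ∈ (Finset.univ : Finset (Fin n)).powerset,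
        c I * ∏ i ∈ I, (if i ∈ T then (1 : ℝ) else -1)) ^ 4 with hS4
  set S2 : ℝ := ∑ T ∈ (Finset.univ : Finset (Fin n)).powerset,
      (∑ I ∈ (Finset.univ : Finset (Fin n)).powerset,
        c I * ∏ i ∈ I, (if i ∈ T then (1 : ℝ) else -1)) ^ 2 with hS2
  have hp : (0 : ℝ) < 2 ^ n := by positivity
  rw [div_mul_eq_mul_div, div_mul_eq_mul_div, one_mul, one_mul, div_pow]
  have hr : 9 ^ r * (S2 ^ 2 / ((2:ℝ) ^ n) ^ 2) = (9 ^ r * S2 ^ 2) / ((2:ℝ) ^ n) ^ 2 := by ring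
  rw [hr, div_le_div_iff₀ hp (by positivity)]
  calc S4 * ((2:ℝ) ^ n) ^ 2 = (2 ^ n * S4) * 2 ^ n := by ring
    _ ≤ (9 ^ r * S2 ^ 2) * 2 ^ n := mul_le_mul_of_nonneg_right key hp.le
    _ = 9 ^ r * S2 ^ 2 * 2 ^ n := by ring
end

section
/- Let f(x_1,...,x_n) = sum over subsets I of [n] of c_I * prod_{i in I} x_i be a multilinear polynomial over {-1,1}^n such that each variable x_i appears in at most rho monomials with nonzero coefficient. If X = f(eps_1,...,eps_n) with eps_i independent uniform on {-1,1}, then E[X^4] <= (2*rho + 1) * (E[X^2])^2. -/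
open Finset
open scoped symmDiff

namespace Stmt5Aux

variable {n : ℕ}

noncomputable def chi (S : Finset (Fin n)) (ε : Fin n → Bool) : ℝ :=
  ∏ i ∈ S, (if ε i then (1 : ℝ) else -1)

lemma chi_union {A B : Finset (Fin n)} (h : Disjoint A B) (ε : Fin n → Bool) :
    chi (A ∪ B) ε = chi A ε * chi B ε := Finset.prod_union h

lemma chi_mul_self (A : Finset (Fin n)) (ε : Fin n → Bool) :
    chi A ε * chi A ε = 1 := by
  rw [chi, ← Finset.prod_mul_distrib]
  apply Finset.prod_eq_one
  intro i _
  by_cases h : ε i <;> simp [h]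

lemma chi_mul (S T : Finset (Fin n)) (ε : Fin n → Bool) :
    chi S ε * chi T ε = chi (S ∆ T) ε := by
  have hS : chi S ε = chi (S \ T) ε * chi (S ∩ T) ε := by
    rw [← chi_union (Finset.disjoint_sdiff_inter S T), Finset.sdiff_union_inter]
  have hT : chi T ε = chi (T \ S) ε * chi (T ∩ S) ε := by
    rw [← chi_union (Finset.disjoint_sdiff_inter T S), Finset.sdiff_union_inter]
  have hsd : S ∆ T = (S \ T) ∪ (T \ S) := by
    rw [symmDiff_def, Finset.sup_eq_union]
  rw [hS, hT, hsd, chi_union disjoint_sdiff_sdiff]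
  have : chi (S ∩ T) ε * chi (T ∩ S) ε = 1 := by
    rw [Finset.inter_comm T S]; exact chi_mul_self _ ε
  calc chi (S \ T) ε * chi (S ∩ T) ε * (chi (T \ S) ε * chi (T ∩ S) ε)
      = chi (S \ T) ε * chi (T \ S) ε * (chi (S ∩ T) ε * chi (T ∩ S) ε) := by ring
    _ = chi (S \ T) ε * chi (T \ S) ε := by rw [this, mul_one]

lemma sum_chi (S : Finset (Fin n)) :
    ∑ ε : Fin n → Bool, chi S ε = if S = ∅ then (2 ^ n : ℝ) else 0 := by
  classical
  by_cases hS : S = ∅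
  · simp [hS, chi, Finset.card_univ]
  · rw [if_neg hS]
    obtain ⟨i, hi⟩ := Finset.nonempty_iff_ne_empty.2 hS
    have hplus : ∀ ε : Fin n → Bool, ε ∈ Finset.univ →
        chi S ε + chi S (Function.update ε i (!ε i)) = 0 := by
      intro ε _
      have key : chi S (Function.update ε i (!ε i)) = - chi S ε := by
        rw [chi, chi, ← Finset.mul_prod_erase _ _ hi, ← Finset.mul_prod_erase _ _ hi]
        have h1 : ∀ j ∈ S.erase i,
            (if Function.update ε i (!ε i) j then (1:ℝ) else -1) =
            (if ε j then (1:ℝ) else -1) := by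
          intro j hj
          rw [Function.update_of_ne (Finset.ne_of_mem_erase hj)]
        rw [Finset.prod_congr rfl h1, Function.update_self]
        by_cases h : ε i <;> simp [h]
      rw [key]; ring
    have hne : ∀ (ε : Fin n → Bool) (hε : ε ∈ Finset.univ), chi S ε ≠ 0 →
        Function.update ε i (!ε i) ≠ ε := by
      intro ε _ _ heq
      have h2 := congrFun heq i
      rw [Function.update_self] at h2
      exact (Bool.not_ne_self (ε i)) h2
    have hmem : ∀ (ε : Fin n → Bool) (hε : ε ∈ Finset.univ),
        Function.update ε i (!ε i) ∈ Finset.univ := fun ε _ => Finset.mem_univ _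
    have hinv : ∀ (ε : Fin n → Bool) (hε : ε ∈ Finset.univ),
        Function.update (Function.update ε i (!ε i)) i (!(Function.update ε i (!ε i) i)) = ε := by
      intro ε _
      funext j
      by_cases hj : j = i
      · subst hj; simp
      · simp [Function.update_of_ne hj]
    exact Finset.sum_involution (fun ε _ => Function.update ε i (!ε i)) hplus hne hmem hinv

lemma sum_chi_mul (S T : Finset (Fin n)) :
    ∑ ε : Fin n → Bool, chi S ε * chi T ε = if S = T then (2 ^ n : ℝ) else 0 := by
  classical
  simp only [chi_mul, sum_chi]
  congr 1
  rw [← Finset.bot_eq_empty, symmDiff_eq_bot]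

/-- Second-moment formula for any coefficient function. -/
lemma moment2 (d : Finset (Fin n) → ℝ) :
    ∑ ε : Fin n → Bool, (∑ I : Finset (Fin n), d I * chi I ε) ^ 2
      = 2 ^ n * ∑ I : Finset (Fin n), d I ^ 2 := by
  classical
  have step1 : ∀ ε : Fin n → Bool,
      (∑ I : Finset (Fin n), d I * chi I ε) ^ 2
        = ∑ I : Finset (Fin n), ∑ J : Finset (Fin n), d I * d J * (chi I ε * chi J ε) := by
    intro ε
    rw [sq, Finset.sum_mul_sum]
    exact Finset.sum_congr rfl fun I _ => Finset.sum_congr rfl fun J _ => by ring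
  calc ∑ ε : Fin n → Bool, (∑ I : Finset (Fin n), d I * chi I ε) ^ 2
      = ∑ ε : Fin n → Bool, ∑ I : Finset (Fin n), ∑ J : Finset (Fin n),
          d I * d J * (chi I ε * chi J ε) :=
        Finset.sum_congr rfl fun ε _ => step1 ε
    _ = ∑ I : Finset (Fin n), ∑ J : Finset (Fin n), ∑ ε : Fin n → Bool,
          d I * d J * (chi I ε * chi J ε) := by
        rw [Finset.sum_comm]
        exact Finset.sum_congr rfl fun I _ => Finset.sum_comm
    _ = ∑ I : Finset (Fin n), ∑ J : Finset (Fin n),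
          d I * d J * (if I = J then (2 ^ n : ℝ) else 0) := by
        refine Finset.sum_congr rfl fun I _ => Finset.sum_congr rfl fun J _ => ?_
        rw [← Finset.mul_sum, sum_chi_mul]
    _ = 2 ^ n * ∑ I : Finset (Fin n), d I ^ 2 := by
        rw [Finset.mul_sum]
        refine Finset.sum_congr rfl fun I _ => ?_
        simp [Finset.mul_sum, mul_ite, Finset.sum_ite_eq, sq]
        ring

noncomputable def aCoef (c : Finset (Fin n) → ℝ) (S : Finset (Fin n)) : ℝ :=
  ∑ I : Finset (Fin n), c I * c (I ∆ S)

lemma sq_expand (c : Finset (Fin n) → ℝ) (ε : Fin n → Bool) :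
    (∑ I : Finset (Fin n), c I * chi I ε) ^ 2
      = ∑ S : Finset (Fin n), aCoef c S * chi S ε := by
  classical
  rw [sq, Finset.sum_mul_sum]
  calc ∑ I : Finset (Fin n), ∑ J : Finset (Fin n), (c I * chi I ε) * (c J * chi J ε)
      = ∑ I : Finset (Fin n), ∑ J : Finset (Fin n), c I * c J * chi (I ∆ J) ε := by
        refine Finset.sum_congr rfl fun I _ => Finset.sum_congr rfl fun J _ => ?_
        rw [← chi_mul]; ring
    _ = ∑ I : Finset (Fin n), ∑ S : Finset (Fin n), c I * c (I ∆ S) * chi S ε := by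
        refine Finset.sum_congr rfl fun I _ => ?_
        refine (Fintype.sum_bijective (fun S => I ∆ S)
          (Function.Involutive.bijective fun S => symmDiff_symmDiff_cancel_left I S)
          _ _ fun S => ?_).symm
        rw [symmDiff_symmDiff_cancel_left]
    _ = ∑ S : Finset (Fin n), aCoef c S * chi S ε := by
        rw [Finset.sum_comm]
        refine Finset.sum_congr rfl fun S _ => ?_
        rw [aCoef, Finset.sum_mul]

lemma aCoef_sq_le {ρ : ℕ} (c : Finset (Fin n) → ℝ)
    (hρ : ∀ i : Fin n,
      (Finset.univ.filter fun I : Finset (Fin n) => i ∈ I ∧ c I ≠ 0).card ≤ ρ)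
    (S : Finset (Fin n)) (hS : S ≠ ∅) :
    aCoef c S ^ 2 ≤ 2 * ρ * ∑ I : Finset (Fin n), c I ^ 2 * c (I ∆ S) ^ 2 := by
  classical
  obtain ⟨i, hi⟩ := Finset.nonempty_iff_ne_empty.2 hS
  set P : Finset (Finset (Fin n)) := Finset.univ.filter (fun I => i ∈ I) with hP
  set P' : Finset (Finset (Fin n)) := Finset.univ.filter (fun I => i ∈ I ∧ c I ≠ 0) with hP'
  -- the reflection bijection between {I : i ∉ I} and {I : i ∈ I}
  have reflect : ∀ g : Finset (Fin n) → Finset (Fin n) → ℝ,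
      (∀ I, g I (I ∆ S) = g (I ∆ S) I) →
      ∑ I ∈ Finset.univ.filter (fun I => ¬ i ∈ I), g I (I ∆ S)
        = ∑ I ∈ P, g I (I ∆ S) := by
    intro g hg
    refine Finset.sum_nbij' (fun I => I ∆ S) (fun J => J ∆ S) ?_ ?_ ?_ ?_ ?_
    · intro I hI
      simp only [hP, Finset.mem_filter, Finset.mem_univ, true_and] at hI ⊢
      rw [Finset.mem_symmDiff]; exact Or.inr ⟨hi, hI⟩
    · intro J hJ
      simp only [hP, Finset.mem_filter, Finset.mem_univ, true_and] at hJ ⊢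
      rw [Finset.mem_symmDiff]
      push_neg
      exact ⟨fun _ => hi, fun _ => hJ⟩
    · intro I _; exact symmDiff_symmDiff_cancel_right S I
    · intro J _; exact symmDiff_symmDiff_cancel_right S J
    · intro I _
      rw [symmDiff_symmDiff_cancel_right]
      exact hg I
  have split : ∀ g : Finset (Fin n) → Finset (Fin n) → ℝ,
      (∀ I, g I (I ∆ S) = g (I ∆ S) I) →
      ∑ I : Finset (Fin n), g I (I ∆ S) = 2 * ∑ I ∈ P, g I (I ∆ S) := by
    intro g hg
    rw [← Finset.sum_filter_add_sum_filter_not Finset.univ (fun I => i ∈ I),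
      ← hP, reflect g hg, two_mul]
  have ha : aCoef c S = 2 * ∑ I ∈ P, c I * c (I ∆ S) :=
    split (fun I J => c I * c J) (fun I => mul_comm _ _)
  have hsub : ∑ I ∈ P, c I * c (I ∆ S) = ∑ I ∈ P', c I * c (I ∆ S) := by
    refine (Finset.sum_subset ?_ ?_).symm
    · intro I hI
      simp only [hP, hP', Finset.mem_filter, Finset.mem_univ, true_and] at hI ⊢
      exact hI.1
    · intro I hI hI'
      simp only [hP, hP', Finset.mem_filter, Finset.mem_univ, true_and] at hI hI'
      push_neg at hI'
      rw [hI' hI, zero_mul]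
  have hCS : (∑ I ∈ P', c I * c (I ∆ S)) ^ 2
      ≤ (P'.card : ℝ) * ∑ I ∈ P', (c I * c (I ∆ S)) ^ 2 := by
    exact_mod_cast sq_sum_le_card_mul_sum_sq (s := P') (f := fun I => c I * c (I ∆ S))
  have hcard : (P'.card : ℝ) ≤ ρ := by exact_mod_cast hρ i
  have hmono : ∑ I ∈ P', (c I * c (I ∆ S)) ^ 2 ≤ ∑ I ∈ P, (c I * c (I ∆ S)) ^ 2 := by
    refine Finset.sum_le_sum_of_subset_of_nonneg ?_ (fun _ _ _ => sq_nonneg _)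
    intro I hI
    simp only [hP, hP', Finset.mem_filter, Finset.mem_univ, true_and] at hI ⊢
    exact hI.1
  have hfull : ∑ I : Finset (Fin n), c I ^ 2 * c (I ∆ S) ^ 2
      = 2 * ∑ I ∈ P, (c I * c (I ∆ S)) ^ 2 := by
    have := split (fun I J => c I ^ 2 * c J ^ 2) (fun I => mul_comm _ _)
    rw [this]
    congr 1
    exact Finset.sum_congr rfl fun I _ => (mul_pow _ _ _).symm
  have hsum_nonneg : (0:ℝ) ≤ ∑ I ∈ P, (c I * c (I ∆ S)) ^ 2 :=
    Finset.sum_nonneg fun _ _ => sq_nonneg _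
  calc aCoef c S ^ 2 = 4 * (∑ I ∈ P', c I * c (I ∆ S)) ^ 2 := by
        rw [ha, hsub]; ring
    _ ≤ 4 * ((P'.card : ℝ) * ∑ I ∈ P', (c I * c (I ∆ S)) ^ 2) := by
        linarith
    _ ≤ 4 * ((ρ : ℝ) * ∑ I ∈ P, (c I * c (I ∆ S)) ^ 2) := by
        have h1 : (P'.card : ℝ) * ∑ I ∈ P', (c I * c (I ∆ S)) ^ 2
            ≤ (ρ : ℝ) * ∑ I ∈ P, (c I * c (I ∆ S)) ^ 2 :=
          mul_le_mul hcard hmono (Finset.sum_nonneg fun _ _ => sq_nonneg _)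
            (Nat.cast_nonneg ρ)
        linarith
    _ = 2 * ρ * ∑ I : Finset (Fin n), c I ^ 2 * c (I ∆ S) ^ 2 := by
        rw [hfull]; ring

lemma sum_off {ρ : ℕ} (c : Finset (Fin n) → ℝ)
    (hρ : ∀ i : Fin n,
      (Finset.univ.filter fun I : Finset (Fin n) => i ∈ I ∧ c I ≠ 0).card ≤ ρ) :
    ∑ S ∈ Finset.univ.erase (∅ : Finset (Fin n)), aCoef c S ^ 2
      ≤ 2 * ρ * (∑ I : Finset (Fin n), c I ^ 2) ^ 2 := by
  classical
  have h1 : ∑ S ∈ Finset.univ.erase (∅ : Finset (Fin n)), aCoef c S ^ 2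
      ≤ ∑ S ∈ Finset.univ.erase (∅ : Finset (Fin n)),
          2 * ρ * ∑ I : Finset (Fin n), c I ^ 2 * c (I ∆ S) ^ 2 := by
    refine Finset.sum_le_sum fun S hS => ?_
    exact aCoef_sq_le c hρ S (Finset.ne_of_mem_erase hS)
  have h2 : ∑ S ∈ Finset.univ.erase (∅ : Finset (Fin n)),
        ∑ I : Finset (Fin n), c I ^ 2 * c (I ∆ S) ^ 2
      ≤ (∑ I : Finset (Fin n), c I ^ 2) ^ 2 := by
    rw [Finset.sum_comm]
    have inner : ∀ I : Finset (Fin n),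
        ∑ S ∈ Finset.univ.erase (∅ : Finset (Fin n)), c I ^ 2 * c (I ∆ S) ^ 2
          ≤ ∑ J : Finset (Fin n), c I ^ 2 * c J ^ 2 := by
      intro I
      have heq : ∑ S ∈ Finset.univ.erase (∅ : Finset (Fin n)), c I ^ 2 * c (I ∆ S) ^ 2
          = ∑ J ∈ Finset.univ.erase I, c I ^ 2 * c J ^ 2 := by
        refine Finset.sum_nbij' (fun S => I ∆ S) (fun J => I ∆ J) ?_ ?_ ?_ ?_ ?_
        · intro S hS
          rw [Finset.mem_erase] at hS ⊢
          refine ⟨?_, Finset.mem_univ _⟩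
          rw [Ne, symmDiff_eq_left, Finset.bot_eq_empty]
          exact hS.1
        · intro J hJ
          rw [Finset.mem_erase] at hJ ⊢
          refine ⟨?_, Finset.mem_univ _⟩
          rw [Ne, ← Finset.bot_eq_empty, symmDiff_eq_bot]
          exact fun h => hJ.1 h.symm
        · intro S _; exact symmDiff_symmDiff_cancel_left I S
        · intro J _; exact symmDiff_symmDiff_cancel_left I J
        · intro S _; rfl
      rw [heq]
      refine Finset.sum_le_sum_of_subset_of_nonneg (Finset.erase_subset _ _) ?_
      intro J _ _
      positivity
    calc ∑ I : Finset (Fin n), ∑ S ∈ Finset.univ.erase (∅ : Finset (Fin n)),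
            c I ^ 2 * c (I ∆ S) ^ 2
        ≤ ∑ I : Finset (Fin n), ∑ J : Finset (Fin n), c I ^ 2 * c J ^ 2 :=
          Finset.sum_le_sum fun I _ => inner I
      _ = (∑ I : Finset (Fin n), c I ^ 2) ^ 2 := by
          rw [sq, Finset.sum_mul_sum]
  calc ∑ S ∈ Finset.univ.erase (∅ : Finset (Fin n)), aCoef c S ^ 2
      ≤ ∑ S ∈ Finset.univ.erase (∅ : Finset (Fin n)),
          2 * ρ * ∑ I : Finset (Fin n), c I ^ 2 * c (I ∆ S) ^ 2 := h1
    _ = 2 * ρ * ∑ S ∈ Finset.univ.erase (∅ : Finset (Fin n)),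
          ∑ I : Finset (Fin n), c I ^ 2 * c (I ∆ S) ^ 2 := by
        rw [Finset.mul_sum]
    _ ≤ 2 * ρ * (∑ I : Finset (Fin n), c I ^ 2) ^ 2 := by
        have h0 : (0:ℝ) ≤ 2 * ρ := by positivity
        exact mul_le_mul_of_nonneg_left h2 h0

lemma aCoef_empty (c : Finset (Fin n) → ℝ) :
    aCoef c ∅ = ∑ I : Finset (Fin n), c I ^ 2 := by
  refine Finset.sum_congr rfl fun I _ => ?_
  rw [← Finset.bot_eq_empty, symmDiff_bot, sq]

end Stmt5Aux

open Classical in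
theorem stmt5 (n ρ : ℕ) (c : Finset (Fin n) → ℝ)
    (hρ : ∀ i : Fin n,
      (Finset.univ.filter fun I : Finset (Fin n) => i ∈ I ∧ c I ≠ 0).card ≤ ρ) :
    (1 / 2 ^ n : ℝ) *
      ∑ ε : Fin n → Bool,
        (∑ I : Finset (Fin n), c I * ∏ i ∈ I, (if ε i then (1 : ℝ) else -1)) ^ 4
    ≤ (2 * ρ + 1) *
      ((1 / 2 ^ n : ℝ) *
        ∑ ε : Fin n → Bool,
          (∑ I : Finset (Fin n), c I * ∏ i ∈ I, (if ε i then (1 : ℝ) else -1)) ^ 2) ^ 2 := by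
  have h2n : (2 ^ n : ℝ) ≠ 0 := by positivity
  have hchi : ∀ ε : Fin n → Bool, ∀ I : Finset (Fin n),
      (∏ i ∈ I, (if ε i then (1 : ℝ) else -1)) = Stmt5Aux.chi I ε := fun _ _ => rfl
  simp only [hchi]
  have hM2 : ∑ ε : Fin n → Bool, (∑ I : Finset (Fin n), c I * Stmt5Aux.chi I ε) ^ 2
      = 2 ^ n * ∑ I : Finset (Fin n), c I ^ 2 := Stmt5Aux.moment2 c
  have hM4 : ∑ ε : Fin n → Bool, (∑ I : Finset (Fin n), c I * Stmt5Aux.chi I ε) ^ 4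
      = 2 ^ n * ∑ S : Finset (Fin n), Stmt5Aux.aCoef c S ^ 2 := by
    have : ∀ ε : Fin n → Bool, (∑ I : Finset (Fin n), c I * Stmt5Aux.chi I ε) ^ 4
        = (∑ S : Finset (Fin n), Stmt5Aux.aCoef c S * Stmt5Aux.chi S ε) ^ 2 := by
      intro ε
      rw [show (4:ℕ) = 2 * 2 from rfl, pow_mul, Stmt5Aux.sq_expand c ε]
    rw [Finset.sum_congr rfl fun ε _ => this ε, Stmt5Aux.moment2]
  rw [hM2, hM4, ← mul_assoc, ← mul_assoc, one_div, inv_mul_cancel₀ h2n, one_mul, one_mul]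
  have hsplit : ∑ S : Finset (Fin n), Stmt5Aux.aCoef c S ^ 2
      = Stmt5Aux.aCoef c ∅ ^ 2
        + ∑ S ∈ Finset.univ.erase (∅ : Finset (Fin n)), Stmt5Aux.aCoef c S ^ 2 :=
    (Finset.add_sum_erase _ _ (Finset.mem_univ ∅)).symm
  have hoff := Stmt5Aux.sum_off c hρ
  rw [hsplit, Stmt5Aux.aCoef_empty]
  nlinarith [sq_nonneg (∑ I : Finset (Fin n), c I ^ 2)]
end

section
/- For every 2-satisfiable CNF formula F with m clauses, there is a truth assignment satisfying at least phi*m clauses, where phi = (sqrt(5)-1)/2 is the golden ratio conjugate (so phi satisfies 1 - phi^2 = phi). -/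
/-!
Set the variables independently, each to `true` with probability `c = φ⁻¹ = (√5 - 1)/2`, except
that a variable whose negation is a unit clause is set to `false` with probability `c`. As no two
unit clauses are complementary, every unit clause is then satisfied with probability `c`. Every
literal is false with probability at most `c`, so a clause containing literals on two distinct
variables fails with probability at most `c² = 1 - c`, and one containing a complementary pair never
fails. Hence the expected number of satisfied clauses is at least `c m`, and some assignment does at
least as well. Only the finitely many variables occurring in the formula matter, so the random
assignment lives on a finite type.
-/

open Finset Real goldenRatio

namespace CNF

variable {V : Type*}

def Satisfies (σ : V → Bool) (C : Finset (V × Bool)) : Prop := ∃ l ∈ C, σ l.1 = l.2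

instance (σ : V → Bool) (C : Finset (V × Bool)) : Decidable (Satisfies σ C) :=
  inferInstanceAs (Decidable (∃ l ∈ C, σ l.1 = l.2))

def TwoSatisfiable (F : List (Finset (V × Bool))) : Prop :=
  ∀ C₁ ∈ F, ∀ C₂ ∈ F, ∃ σ : V → Bool, Satisfies σ C₁ ∧ Satisfies σ C₂

theorem satisfies_iff_exists_mem {σ : V → Bool} {C : Finset (V × Bool)} :
    Satisfies σ C ↔ ∃ v, (v, σ v) ∈ C :=
  ⟨fun ⟨l, hl, h⟩ => ⟨l.1, by rwa [h]⟩, fun ⟨v, hv⟩ => ⟨_, hv, rfl⟩⟩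

theorem satisfies_singleton {σ : V → Bool} {l : V × Bool} : Satisfies σ {l} ↔ σ l.1 = l.2 := by
  simp [Satisfies]

theorem TwoSatisfiable.singleton_false_notMem {F : List (Finset (V × Bool))}
    (hF : TwoSatisfiable F) {v : V} (hv : {(v, true)} ∈ F) : {(v, false)} ∉ F := fun hv' => by
  obtain ⟨σ, h, h'⟩ := hF _ hv _ hv'
  rw [satisfies_singleton] at h h'
  exact Bool.noConfusion (h.symm.trans h')

section FailMass

variable [DecidableEq V] {q : V → Bool → ℝ} {C : Finset (V × Bool)} {v : V}

-- The probability that the value of `v` makes no literal of `C` on `v` true.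
def failMass (q : V → Bool → ℝ) (C : Finset (V × Bool)) (v : V) : ℝ :=
  ∑ b, if (v, b) ∉ C then q v b else 0

theorem failMass_nonneg (hq0 : ∀ v b, 0 ≤ q v b) : 0 ≤ failMass q C v :=
  sum_nonneg fun b _ => by split_ifs <;> simp [hq0]

theorem failMass_le_one (hq0 : ∀ v b, 0 ≤ q v b) (hq : ∀ v, ∑ b, q v b = 1) :
    failMass q C v ≤ 1 :=
  hq v ▸ sum_le_sum fun b _ => by split_ifs <;> simp [hq0]

theorem failMass_le_of_mem (hq0 : ∀ v b, 0 ≤ q v b) {b : Bool} (h : (v, b) ∈ C) :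
    failMass q C v ≤ q v (!b) := by
  cases b <;>
    simp only [failMass, Fintype.sum_bool, h, not_true_eq_false, if_false, add_zero, zero_add,
      Bool.not_true, Bool.not_false] <;>
    split_ifs <;> simp [hq0]

theorem failMass_eq_zero {b : Bool} (h : (v, b) ∈ C) (h' : (v, !b) ∈ C) : failMass q C v = 0 := by
  cases b <;> simp_all [failMass]

end FailMass

section ProductWeight

variable [Fintype V]

-- `σ v = b` with probability `q v b`, independently for each `v`.
def weight (q : V → Bool → ℝ) (σ : V → Bool) : ℝ := ∏ v, q v (σ v)

theorem weight_nonneg {q : V → Bool → ℝ} (hq0 : ∀ v b, 0 ≤ q v b) (σ : V → Bool) :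
    0 ≤ weight q σ :=
  prod_nonneg fun v _ => hq0 v (σ v)

variable [DecidableEq V]

def prob (q : V → Bool → ℝ) (E : (V → Bool) → Prop) [DecidablePred E] : ℝ :=
  ∑ σ, if E σ then weight q σ else 0

variable {q : V → Bool → ℝ}

theorem sum_weight (hq : ∀ v, ∑ b, q v b = 1) : ∑ σ, weight q σ = 1 := by
  simp only [weight, ← Fintype.prod_sum, hq, prod_const_one]

theorem prob_forall (P : V → Bool → Prop) [∀ v, DecidablePred (P v)] :
    prob q (fun σ => ∀ v, P v (σ v)) = ∏ v, ∑ b, if P v b then q v b else 0 := by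
  simp only [prob, weight, Fintype.prod_sum, Fintype.prod_ite_zero]

theorem prob_satisfies (hq : ∀ v, ∑ b, q v b = 1) (C : Finset (V × Bool)) :
    prob q (Satisfies · C) = 1 - ∏ v, failMass q C v := by
  simp only [failMass]
  rw [← prob_forall, ← sum_weight hq, prob, prob, ← sum_sub_distrib]
  refine sum_congr rfl fun σ _ => ?_
  have hunsat : (∀ v, (v, σ v) ∉ C) ↔ ¬Satisfies σ C := by
    rw [satisfies_iff_exists_mem, not_exists]
  simp only [hunsat]
  split_ifs <;> simp_all

theorem exists_le_of_le_sum_weight_mul (hq0 : ∀ v b, 0 ≤ q v b) (hq : ∀ v, ∑ b, q v b = 1)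
    {a : ℝ} {f : (V → Bool) → ℝ} (h : a ≤ ∑ σ, weight q σ * f σ) : ∃ σ, a ≤ f σ := by
  obtain ⟨σ, hσ⟩ := Finite.exists_max f
  refine ⟨σ, h.trans ?_⟩
  calc ∑ τ, weight q τ * f τ ≤ ∑ τ, weight q τ * f σ :=
        sum_le_sum fun τ _ => mul_le_mul_of_nonneg_left (hσ τ) (weight_nonneg hq0 τ)
    _ = f σ := by rw [← sum_mul, sum_weight hq, one_mul]

theorem mul_length_le_sum_weight_mul_countP {c : ℝ} (F : List (Finset (V × Bool)))
    (hF : ∀ C ∈ F, c ≤ prob q (Satisfies · C)) :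
    c * F.length ≤ ∑ σ, weight q σ * F.countP (fun C => decide (Satisfies σ C)) := by
  induction F with
  | nil => simp
  | cons C F ih =>
    have hC := hF C List.mem_cons_self
    have hF' := ih fun D hD => hF D (List.mem_cons_of_mem C hD)
    simp only [List.countP_cons, List.length_cons, Nat.cast_add, Nat.cast_ite, Nat.cast_one,
      Nat.cast_zero, decide_eq_true_eq, mul_add, sum_add_distrib, mul_ite, mul_one, mul_zero]
    rw [prob] at hC
    exact add_le_add hF' hC

theorem le_prob_satisfies {c : ℝ} (hc : c * c ≤ 1 - c) (hq0 : ∀ v b, 0 ≤ q v b)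
    (hq : ∀ v, ∑ b, q v b = 1) (hqc : ∀ v b, q v b ≤ c) {C : Finset (V × Bool)}
    (hC : C.Nonempty) (hunit : ∀ l, C = {l} → c ≤ q l.1 l.2) :
    c ≤ prob q (Satisfies · C) := by
  rw [prob_satisfies hq]
  have hprod_le (s : Finset V) : ∏ v, failMass q C v ≤ ∏ v ∈ s, failMass q C v :=
    prod_le_prod_of_subset_of_le_one (subset_univ s) (fun v _ => failMass_nonneg hq0)
      fun v _ _ => failMass_le_one hq0 hq
  obtain ⟨⟨v₁, b₁⟩, hl₁⟩ := hC
  suffices ∏ v, failMass q C v ≤ 1 - c by linarith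
  by_cases hsingle : C = {(v₁, b₁)}
  · calc ∏ v, failMass q C v ≤ failMass q C v₁ := by simpa using hprod_le {v₁}
      _ ≤ q v₁ (!b₁) := failMass_le_of_mem hq0 hl₁
      _ = 1 - q v₁ b₁ := by
          have := hq v₁
          cases b₁ <;> simp only [Fintype.sum_bool, Bool.not_true, Bool.not_false] at this ⊢ <;>
            linarith
      _ ≤ 1 - c := by linarith [hunit _ hsingle]
  obtain ⟨⟨v₂, b₂⟩, hl₂, hne⟩ : ∃ l₂ ∈ C, l₂ ≠ (v₁, b₁) := by
    by_contra! h
    exact hsingle (eq_singleton_iff_unique_mem.2 ⟨hl₁, h⟩)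
  by_cases hv : v₂ = v₁
  · subst hv
    have hb : b₁ = !b₂ := by cases b₁ <;> cases b₂ <;> simp_all
    calc ∏ v, failMass q C v ≤ failMass q C v₂ := by simpa using hprod_le {v₂}
      _ = 0 := failMass_eq_zero hl₂ (hb ▸ hl₁)
      _ ≤ c * c := mul_self_nonneg c
      _ ≤ 1 - c := hc
  · calc ∏ v, failMass q C v ≤ failMass q C v₁ * failMass q C v₂ := by
          simpa [prod_pair (Ne.symm hv)] using hprod_le {v₁, v₂}
      _ ≤ c * c := mul_le_mul ((failMass_le_of_mem hq0 hl₁).trans (hqc _ _))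
          ((failMass_le_of_mem hq0 hl₂).trans (hqc _ _)) (failMass_nonneg hq0)
          ((hq0 v₁ b₁).trans (hqc _ _))
      _ ≤ 1 - c := hc

end ProductWeight

theorem TwoSatisfiable.exists_mul_length_le_countP_of_fintype [Fintype V] [DecidableEq V] {c : ℝ}
    (hc : c * c ≤ 1 - c) (hc' : 1 - c ≤ c) {F : List (Finset (V × Bool))}
    (hne : ∀ C ∈ F, C.Nonempty) (hF : TwoSatisfiable F) :
    ∃ σ : V → Bool, c * F.length ≤ F.countP (fun C => decide (Satisfies σ C)) := by
  set pref : V → Bool := fun v => decide ({(v, false)} ∉ F)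
  set q : V → Bool → ℝ := fun v b => if b = pref v then c else 1 - c
  have hq0 : ∀ v b, 0 ≤ q v b := by
    intro v b
    dsimp only [q]
    split_ifs <;> linarith [(mul_self_nonneg c).trans hc]
  have hq : ∀ v, ∑ b, q v b = 1 := by
    intro v
    cases h : pref v <;> simp [q, h]
  have hqc : ∀ v b, q v b ≤ c := by
    intro v b
    dsimp only [q]
    split_ifs <;> linarith
  have hunit : ∀ C ∈ F, ∀ l, C = {l} → c ≤ q l.1 l.2 := by
    rintro C hC ⟨v, b⟩ rfl
    suffices b = pref v by simp [q, this]
    cases b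
    · simp [pref, hC]
    · simp [pref, hF.singleton_false_notMem hC]
  exact exists_le_of_le_sum_weight_mul hq0 hq <| mul_length_le_sum_weight_mul_countP F
    fun C hC => le_prob_satisfies hc hq0 hq hqc (hne C hC) (hunit C hC)

noncomputable def restrictVars (S : Finset V) (C : Finset (V × Bool)) : Finset (S × Bool) :=
  C.preimage (Prod.map Subtype.val id) (Subtype.val_injective.prodMap Function.injective_id).injOn

theorem satisfies_restrictVars {S : Finset V} {C : Finset (V × Bool)} (hC : ∀ l ∈ C, l.1 ∈ S)
    (σ : V → Bool) : Satisfies (fun i : S => σ i) (restrictVars S C) ↔ Satisfies σ C := by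
  simp only [satisfies_iff_exists_mem, restrictVars, mem_preimage, Prod.map_apply, id]
  exact ⟨fun ⟨i, h⟩ => ⟨i, h⟩, fun ⟨v, h⟩ => ⟨⟨v, hC _ h⟩, h⟩⟩

theorem TwoSatisfiable.map_restrictVars {S : Finset V} {F : List (Finset (V × Bool))}
    (hS : ∀ C ∈ F, ∀ l ∈ C, l.1 ∈ S) (hF : TwoSatisfiable F) :
    TwoSatisfiable (F.map (restrictVars S)) := by
  simp only [TwoSatisfiable, List.forall_mem_map]
  intro C₁ hC₁ C₂ hC₂
  obtain ⟨σ, h₁, h₂⟩ := hF C₁ hC₁ C₂ hC₂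
  exact ⟨fun i => σ i, (satisfies_restrictVars (hS C₁ hC₁) σ).2 h₁,
    (satisfies_restrictVars (hS C₂ hC₂) σ).2 h₂⟩

theorem countP_map_restrictVars {S : Finset V} {F : List (Finset (V × Bool))}
    (hS : ∀ C ∈ F, ∀ l ∈ C, l.1 ∈ S) (τ : S → Bool) :
    (F.map (restrictVars S)).countP (fun C => decide (Satisfies τ C)) =
      F.countP (fun C => decide (Satisfies (Function.extend Subtype.val τ fun _ => false) C)) := by
  have hτ : (fun i : S => Function.extend Subtype.val τ (fun _ => false) i) = τ :=
    funext fun i => Subtype.val_injective.extend_apply _ _ i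
  rw [List.countP_map]
  refine List.countP_congr fun C hC => ?_
  simp only [Function.comp_apply, decide_eq_true_eq, ← satisfies_restrictVars (hS C hC), hτ]

theorem TwoSatisfiable.exists_mul_length_le_countP {c : ℝ} (hc : c * c ≤ 1 - c) (hc' : 1 - c ≤ c)
    {F : List (Finset (V × Bool))} (hne : ∀ C ∈ F, C.Nonempty) (hF : TwoSatisfiable F) :
    ∃ σ : V → Bool, c * F.length ≤ F.countP (fun C => decide (Satisfies σ C)) := by
  classical
  set S := F.toFinset.biUnion (image Prod.fst)
  have hS : ∀ C ∈ F, ∀ l ∈ C, l.1 ∈ S := fun C hC l hl =>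
    mem_biUnion.2 ⟨C, List.mem_toFinset.2 hC, mem_image_of_mem _ hl⟩
  have hne' : ∀ C ∈ F.map (restrictVars S), C.Nonempty := by
    simp only [List.forall_mem_map]
    intro C hC
    obtain ⟨l, hl⟩ := hne C hC
    exact ⟨(⟨l.1, hS C hC l hl⟩, l.2), by simpa [restrictVars] using hl⟩
  obtain ⟨τ, hτ⟩ := (hF.map_restrictVars hS).exists_mul_length_le_countP_of_fintype hc hc' hne'
  rw [countP_map_restrictVars hS, List.length_map] at hτ
  exact ⟨_, hτ⟩

end CNF

theorem stmt6 {V : Type*} (F : List (Finset (V × Bool)))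
    (hne : ∀ C ∈ F, C.Nonempty)
    (h2sat : ∀ C₁ ∈ F, ∀ C₂ ∈ F, ∃ σ : V → Bool,
      (∃ l ∈ C₁, σ l.1 = l.2) ∧ (∃ l ∈ C₂, σ l.1 = l.2)) :
    ∃ σ : V → Bool,
      ((Real.sqrt 5 - 1) / 2) * F.length
        ≤ (F.countP (fun C => decide (∃ l ∈ C, σ l.1 = l.2)) : ℝ) := by
  have hφ : (√5 - 1) / 2 = φ⁻¹ := by rw [inv_goldenRatio]; ring
  have hsq : φ⁻¹ * φ⁻¹ ≤ 1 - φ⁻¹ := by rw [inv_goldenRatio]; linarith [goldenConj_sq]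
  have hhalf : 1 - φ⁻¹ ≤ φ⁻¹ := by
    rw [inv_goldenRatio]
    nlinarith [goldenConj_sq, goldenConj_neg]
  rw [hφ]
  exact CNF.TwoSatisfiable.exists_mul_length_le_countP hsq hhalf hne h2sat
end

section
/- For every 3-satisfiable CNF formula F with m clauses, there is a truth assignment satisfying at least (2/3)*m clauses. -/
/-!
Set each variable independently: true with probability 2/3 if `{v}` is a clause, with probability
1/3 if `{¬v}` is a clause (3-satisfiability excludes both), and with probability 1/2 otherwise.
Every literal is then false with probability at most 2/3, the literal of a unit clause with
probability 1/3, and in a clause `{l₁, l₂}` at most one literal is false with probability 2/3: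
otherwise `{¬l₁}`, `{¬l₂}`, `{l₁, l₂}` would be three clauses of the formula that no assignment
satisfies together. Hence a clause fails with probability at most 1/3, 2/3 · 1/2 or (2/3)³, and
some assignment satisfies at least the expected number `2m/3` of clauses. The probabilities are
realized by counting: each variable draws an outcome in `Fin 6`.
-/

open Finset

theorem mul_prod_le_pow_card_of_subset {ι : Type*} {s t : Finset ι} (hts : t ⊆ s) {f : ι → ℕ}
    {b c : ℕ} (hf : ∀ i ∈ s, f i ≤ b) (ht : c * ∏ i ∈ t, f i ≤ b ^ #t) :
    c * ∏ i ∈ s, f i ≤ b ^ #s := by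
  classical
  have hrest : ∏ i ∈ s \ t, f i ≤ b ^ #(s \ t) :=
    prod_le_pow_card _ _ _ fun i hi => hf i (mem_sdiff.1 hi).1
  calc c * ∏ i ∈ s, f i = (∏ i ∈ s \ t, f i) * (c * ∏ i ∈ t, f i) := by
        rw [← prod_sdiff hts]; ring
    _ ≤ b ^ #(s \ t) * b ^ #t := Nat.mul_le_mul hrest ht
    _ = b ^ #s := by rw [← pow_add, card_sdiff_add_card_eq_card hts]

/-- Read `w l / 6` as the probability that the literal `l` is false. -/
theorem exists_subset_three_mul_prod_le {α : Type*} [DecidableEq α] {C : Finset α}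
    (hC : C.Nonempty) {w : α → ℕ}
    (hw : ∀ l ∈ C, w l ≤ 4) (hunit : ∀ l, C = {l} → w l ≤ 2)
    (hpair : ∀ l₁ l₂, C = {l₁, l₂} → w l₁ ≤ 3 ∨ w l₂ ≤ 3) :
    ∃ D ⊆ C, 3 * ∏ l ∈ D, w l ≤ 6 ^ #D := by
  obtain hC1 | hC2 | hC3 : #C = 1 ∨ #C = 2 ∨ 3 ≤ #C := by have := hC.card_pos; omega
  · obtain ⟨l, rfl⟩ := card_eq_one.1 hC1
    refine ⟨{l}, subset_rfl, ?_⟩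
    simp only [prod_singleton, card_singleton]
    linarith [hunit l rfl]
  · obtain ⟨l₁, l₂, hne, rfl⟩ := card_eq_two.1 hC2
    refine ⟨{l₁, l₂}, subset_rfl, ?_⟩
    rw [prod_pair hne, card_pair hne]
    have h₁ := hw l₁ (by simp)
    have h₂ := hw l₂ (by simp)
    rcases hpair l₁ l₂ rfl with h | h
    · nlinarith [Nat.mul_le_mul h h₂]
    · nlinarith [Nat.mul_le_mul h₁ h]
  · obtain ⟨D, hDC, hD⟩ := exists_subset_card_eq hC3
    refine ⟨D, hDC, ?_⟩
    have h64 : ∏ l ∈ D, w l ≤ 4 ^ #D := prod_le_pow_card D w 4 fun l hl => hw l (hDC hl)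
    rw [hD] at h64 ⊢
    omega

section Averaging

variable {Ω α : Type*} [Fintype Ω] (F : List α) (p : Ω → α → Prop) [∀ ω C, Decidable (p ω C)]
  (a b : ℕ)

theorem sum_mul_length_le_sum_mul_countP (h : ∀ C ∈ F, a * Fintype.card Ω ≤ b * #{ω | p ω C}) :
    ∑ _ω : Ω, a * F.length ≤ ∑ ω, b * F.countP (fun C => decide (p ω C)) := by
  induction F with
  | nil => simp
  | cons C F ih =>
    have hconst : ∑ _ω : Ω, a = a * Fintype.card Ω := by simp [mul_comm]
    have hfilter : ∑ ω : Ω, b * (if decide (p ω C) then 1 else 0) = b * #{ω | p ω C} := by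
      simp only [decide_eq_true_eq, ← mul_sum, sum_boole, Nat.cast_id]
    simp only [List.length_cons, List.countP_cons, mul_add, sum_add_distrib, mul_one, hconst,
      hfilter]
    exact add_le_add (ih fun D hD => h D (List.mem_cons_of_mem C hD)) (h C List.mem_cons_self)

theorem exists_mul_length_le_mul_countP [Nonempty Ω]
    (h : ∀ C ∈ F, a * Fintype.card Ω ≤ b * #{ω | p ω C}) :
    ∃ ω, a * F.length ≤ b * F.countP (fun C => decide (p ω C)) := by
  obtain ⟨ω, -, hω⟩ :=
    exists_le_of_sum_le univ_nonempty (sum_mul_length_le_sum_mul_countP F p a b h)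
  exact ⟨ω, hω⟩

end Averaging

section RandomAssignment

variable {V : Type*} [DecidableEq V] (S : Finset V) (T : V → ℕ) {C : Finset (V × Bool)}

/-- The outcome `ω v ∈ Fin 6` makes `v` true iff `ω v < T v`, i.e. with probability `T v / 6`. -/
def thresholdAssignment (ω : S → Fin 6) (v : V) : Bool :=
  if h : v ∈ S then decide ((ω ⟨v, h⟩ : ℕ) < T v) else false

def falseCount (k : ℕ) (b : Bool) : ℕ := #{t : Fin 6 | decide ((t : ℕ) < k) ≠ b}

theorem falseCount_eq {k : ℕ} (hk : k ≤ 6) (b : Bool) :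
    falseCount k b = if b then 6 - k else k := by
  interval_cases k <;> cases b <;> decide

variable (C) in
def falsifyingOutcomes (v : V) : Finset (Fin 6) :=
  {t | ∀ b, (v, b) ∈ C → decide ((t : ℕ) < T v) ≠ b}

theorem card_not_satisfies_eq_prod (hCS : ∀ l ∈ C, l.1 ∈ S) :
    #{ω : S → Fin 6 | ¬ ∃ l ∈ C, thresholdAssignment S T ω l.1 = l.2}
      = ∏ v ∈ S, #(falsifyingOutcomes T C v) := by
  rw [← prod_coe_sort, ← Fintype.card_piFinset]
  congr 1
  ext ω
  simp only [mem_filter, mem_univ, true_and, Fintype.mem_piFinset, falsifyingOutcomes,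
    thresholdAssignment, not_exists, not_and]
  constructor
  · intro H v b hb
    simpa [dif_pos v.2] using H (v.1, b) hb
  · intro H l hl
    simpa [dif_pos (hCS l hl)] using H ⟨l.1, hCS l hl⟩ l.2 hl

theorem card_falsifyingOutcomes_le {v : V} {b : Bool} (h : (v, b) ∈ C) :
    #(falsifyingOutcomes T C v) ≤ falseCount (T v) b :=
  card_le_card fun t ht => by
    simp only [falsifyingOutcomes, mem_filter, mem_univ, true_and] at ht ⊢
    exact ht b h

theorem falsifyingOutcomes_eq_empty {v : V} (htrue : (v, true) ∈ C) (hfalse : (v, false) ∈ C) :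
    falsifyingOutcomes T C v = ∅ := by
  ext t
  simp only [falsifyingOutcomes, mem_filter, mem_univ, true_and, notMem_empty, iff_false]
  intro H
  cases hd : decide ((t : ℕ) < T v)
  · exact H false hfalse hd
  · exact H true htrue hd

theorem three_mul_prod_card_falsifyingOutcomes_le (hCS : ∀ l ∈ C, l.1 ∈ S)
    (hD : ∃ D ⊆ C, 3 * ∏ l ∈ D, falseCount (T l.1) l.2 ≤ 6 ^ #D) :
    3 * ∏ v ∈ S, #(falsifyingOutcomes T C v) ≤ 6 ^ #S := by
  by_cases htaut : ∃ v, (v, true) ∈ C ∧ (v, false) ∈ C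
  · obtain ⟨v, htrue, hfalse⟩ := htaut
    rw [prod_eq_zero (hCS _ htrue) (by rw [falsifyingOutcomes_eq_empty T htrue hfalse]; rfl)]
    positivity
  push Not at htaut
  have hinj : Set.InjOn Prod.fst (C : Set (V × Bool)) := by
    rintro ⟨v, b₁⟩ h₁ ⟨w, b₂⟩ h₂ (rfl : v = w)
    cases b₁ <;> cases b₂ <;> first | rfl | simp_all
  obtain ⟨D, hDC, hD⟩ := hD
  refine mul_prod_le_pow_card_of_subset (t := D.image Prod.fst)
    (fun v hv => ?_) (fun v _ => ?_) ?_
  · obtain ⟨l, hl, rfl⟩ := mem_image.1 hv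
    exact hCS l (hDC hl)
  · simpa using card_le_univ (falsifyingOutcomes T C v)
  · rw [prod_image (hinj.mono hDC), card_image_of_injOn (hinj.mono hDC)]
    refine le_trans (Nat.mul_le_mul_left 3 (prod_le_prod' fun l hl => ?_)) hD
    exact card_falsifyingOutcomes_le T (hDC hl)

theorem two_mul_pow_card_le_three_mul_card_satisfies (hCS : ∀ l ∈ C, l.1 ∈ S)
    (hD : ∃ D ⊆ C, 3 * ∏ l ∈ D, falseCount (T l.1) l.2 ≤ 6 ^ #D) :
    2 * 6 ^ #S ≤ 3 * #{ω : S → Fin 6 | ∃ l ∈ C, thresholdAssignment S T ω l.1 = l.2} := by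
  have hsplit := card_filter_add_card_filter_not (s := (univ : Finset (S → Fin 6)))
    (fun ω => ∃ l ∈ C, thresholdAssignment S T ω l.1 = l.2)
  rw [card_not_satisfies_eq_prod S T hCS, card_univ, Fintype.card_fun, Fintype.card_fin,
    Fintype.card_coe] at hsplit
  have := three_mul_prod_card_falsifyingOutcomes_le S T hCS hD
  omega

end RandomAssignment

section ThreeSatisfiable

variable {V : Type*} [DecidableEq V] (F : List (Finset (V × Bool)))

def unitBias (v : V) : ℕ :=
  if {(v, true)} ∈ F then 4 else if {(v, false)} ∈ F then 2 else 3

theorem unitBias_le_six (v : V) : unitBias F v ≤ 6 := by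
  unfold unitBias; split_ifs <;> omega

theorem falseCount_unitBias_le_four (v : V) (b : Bool) : falseCount (unitBias F v) b ≤ 4 := by
  rw [falseCount_eq (unitBias_le_six F v)]
  unfold unitBias; split_ifs <;> simp

theorem falseCount_unitBias_le_two {v : V} {b : Bool} (h : {(v, b)} ∈ F) (hc : {(v, !b)} ∉ F) :
    falseCount (unitBias F v) b ≤ 2 := by
  rw [falseCount_eq (unitBias_le_six F v)]
  cases b <;> simp_all [unitBias]

theorem mem_of_three_lt_falseCount_unitBias {v : V} {b : Bool}
    (h : 3 < falseCount (unitBias F v) b) : {(v, !b)} ∈ F := by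
  rw [falseCount_eq (unitBias_le_six F v)] at h
  unfold unitBias at h
  cases b <;> split_ifs at h <;> simp_all

theorem exists_subset_three_mul_prod_falseCount_unitBias_le
    (h3sat : ∀ C₁ ∈ F, ∀ C₂ ∈ F, ∀ C₃ ∈ F, ∃ σ : V → Bool,
      (∃ l ∈ C₁, σ l.1 = l.2) ∧ (∃ l ∈ C₂, σ l.1 = l.2) ∧ (∃ l ∈ C₃, σ l.1 = l.2))
    {C : Finset (V × Bool)} (hC : C ∈ F) (hne : C.Nonempty) :
    ∃ D ⊆ C, 3 * ∏ l ∈ D, falseCount (unitBias F l.1) l.2 ≤ 6 ^ #D := by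
  refine exists_subset_three_mul_prod_le hne (fun l _ => falseCount_unitBias_le_four F l.1 l.2)
    (fun l hCl => falseCount_unitBias_le_two F (hCl ▸ hC) fun hc => ?_) fun l₁ l₂ hCl => ?_
  · obtain ⟨σ, h₁, h₂, -⟩ := h3sat _ (hCl ▸ hC) _ hc _ hc
    simp_all
  · by_contra! hlarge
    obtain ⟨σ, h₁, h₂, l, hl, hσl⟩ := h3sat _ (mem_of_three_lt_falseCount_unitBias F hlarge.1) _
      (mem_of_three_lt_falseCount_unitBias F hlarge.2) _ hC
    simp only [mem_singleton, exists_eq_left] at h₁ h₂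
    rw [hCl, mem_insert, mem_singleton] at hl
    rcases hl with rfl | rfl <;> simp_all

end ThreeSatisfiable

theorem stmt8 {V : Type*} (F : List (Finset (V × Bool)))
    (hne : ∀ C ∈ F, C.Nonempty)
    (h3sat : ∀ C₁ ∈ F, ∀ C₂ ∈ F, ∀ C₃ ∈ F, ∃ σ : V → Bool,
      (∃ l ∈ C₁, σ l.1 = l.2) ∧ (∃ l ∈ C₂, σ l.1 = l.2) ∧ (∃ l ∈ C₃, σ l.1 = l.2)) :
    ∃ σ : V → Bool,
      (2 / 3 : ℝ) * F.length
        ≤ (F.countP (fun C => decide (∃ l ∈ C, σ l.1 = l.2)) : ℝ) := by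
  classical
  let S : Finset V := F.toFinset.biUnion fun C => C.image Prod.fst
  have hCS : ∀ C ∈ F, ∀ l ∈ C, l.1 ∈ S := fun C hC l hl =>
    mem_biUnion.2 ⟨C, List.mem_toFinset.2 hC, mem_image_of_mem _ hl⟩
  obtain ⟨ω, hω⟩ := exists_mul_length_le_mul_countP F
    (fun ω C => ∃ l ∈ C, thresholdAssignment S (unitBias F) ω l.1 = l.2) 2 3 fun C hC => by
      simpa using two_mul_pow_card_le_three_mul_card_satisfies S (unitBias F) (hCS C hC)
        (exists_subset_three_mul_prod_falseCount_unitBias_le F h3sat hC (hne C hC))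
  refine ⟨thresholdAssignment S (unitBias F) ω, ?_⟩
  have hω' := (Nat.cast_le (α := ℝ)).2 hω
  push_cast at hω'
  linarith
end

section
/- Let M be a set of vectors in F_2^n containing a basis of F_2^n, with each vector of M having at most r nonzero coordinates. If k >= 1 is an integer and n >= r*(k-1)+1, then there exists a subset K of M with |K| = k such that K is M-sum-free, i.e., no sum of two or more distinct vectors of K equals a vector of M. -/
theorem stmt10 (n r k : ℕ) (M : Finset (Fin n → ZMod 2))
    (hspan : Submodule.span (ZMod 2) (M : Set (Fin n → ZMod 2)) = ⊤)
    (hr : ∀ v ∈ M, (Finset.univ.filter fun i => v i ≠ 0).card ≤ r)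
    (hk : 1 ≤ k) (hn : r * (k - 1) + 1 ≤ n) :
    ∃ K ⊆ M, K.card = k ∧ ∀ K' ⊆ K, 2 ≤ K'.card → (∑ v ∈ K', v) ∉ M := by
  classical
  set one : Fin n → ZMod 2 := fun _ => 1 with hone_def
  -- the all-ones vector is a sum of a subset of M
  have hone : one ∈ Submodule.span (ZMod 2) (M : Set (Fin n → ZMod 2)) := by
    rw [hspan]; trivial
  obtain ⟨c, hsupp, hsum⟩ := Submodule.mem_span_set.mp hone
  have hz2 : ∀ a : ZMod 2, a ≠ 0 → a = 1 := by decide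
  have hC₀sum : (∑ v ∈ c.support, v) = one := by
    rw [← hsum, Finsupp.sum]
    refine Finset.sum_congr rfl ?_
    intro v hv
    rw [hz2 (c v) (Finsupp.mem_support_iff.mp hv), one_smul]
  -- the family of subsets of M summing to the all-ones vector
  set P := M.powerset.filter (fun C => (∑ v ∈ C, v) = one) with hP_def
  have hPne : P.Nonempty := by
    refine ⟨c.support, ?_⟩
    simp only [hP_def, Finset.mem_filter, Finset.mem_powerset]
    constructor
    · intro x hx
      exact_mod_cast hsupp hx
    · exact hC₀sum
  obtain ⟨C, hCP, hCmin⟩ := P.exists_min_image (fun C => C.card) hPne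
  simp only [hP_def, Finset.mem_filter, Finset.mem_powerset] at hCP
  obtain ⟨hCM, hCsum⟩ := hCP
  have hmin : ∀ C' : Finset (Fin n → ZMod 2), C' ⊆ M → (∑ v ∈ C', v) = one →
      C.card ≤ C'.card := by
    intro C' h1 h2
    apply hCmin
    simp only [hP_def, Finset.mem_filter, Finset.mem_powerset]
    exact ⟨h1, h2⟩
  have hself : ∀ v : Fin n → ZMod 2, v + v = 0 := by
    intro v; funext i
    have : ∀ a : ZMod 2, a + a = 0 := by decide
    exact this (v i)
  -- C is sum-free with respect to M
  have hfree : ∀ S ⊆ C, 2 ≤ S.card → (∑ v ∈ S, v) ∉ M := by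
    intro S hS h2 hmem
    set m := ∑ v ∈ S, v with hm_def
    -- a helper: removing a nonempty zero-sum subset T of C contradicts minimality
    have hremove : ∀ T : Finset (Fin n → ZMod 2), T ⊆ C → T.Nonempty →
        (∑ v ∈ T, v) = 0 → False := by
      intro T hTC hTne hT0
      have hsd : (∑ v ∈ C \ T, v) + (∑ v ∈ T, v) = ∑ v ∈ C, v :=
        Finset.sum_sdiff hTC
      rw [hT0, add_zero, hCsum] at hsd
      have hle := hmin (C \ T) ((Finset.sdiff_subset).trans hCM) hsd
      have hcard : (C \ T).card = C.card - T.card := Finset.card_sdiff_of_subset hTC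
      have hTpos : 0 < T.card := Finset.card_pos.mpr hTne
      have hTle : T.card ≤ C.card := Finset.card_le_card hTC
      omega
    by_cases hmC : m ∈ C
    · by_cases hmS : m ∈ S
      · -- S.erase m is a nonempty zero-sum subset of C
        refine hremove (S.erase m) ((Finset.erase_subset _ _).trans hS) ?_ ?_
        · have : 1 ≤ (S.erase m).card := by
            have := Finset.card_erase_of_mem hmS
            omega
          exact Finset.card_pos.mp (by omega)
        · have h := Finset.add_sum_erase S (fun v => v) hmS
          -- h : m + ∑ v ∈ S.erase m, v = ∑ v ∈ S, v = m
          have h' : m + (∑ v ∈ S.erase m, v) = m := by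
            rw [h, hm_def]
          calc (∑ v ∈ S.erase m, v) = m + (m + (∑ v ∈ S.erase m, v)) := by
                rw [← add_assoc, hself, zero_add]
            _ = m + m := by rw [h']
            _ = 0 := hself m
      · -- insert m S is a nonempty zero-sum subset of C
        refine hremove (insert m S) ?_ ⟨m, Finset.mem_insert_self _ _⟩ ?_
        · intro x hx
          rcases Finset.mem_insert.mp hx with h | h
          · rwa [h]
          · exact hS h
        · rw [Finset.sum_insert hmS, ← hm_def, hself]
    · -- replace S by {m}, getting a strictly smaller set summing to one
      have hmCS : m ∉ C \ S := fun h => hmC (Finset.mem_sdiff.mp h).1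
      have hsd : (∑ v ∈ C \ S, v) + (∑ v ∈ S, v) = ∑ v ∈ C, v :=
        Finset.sum_sdiff hS
      have hsum' : (∑ v ∈ insert m (C \ S), v) = one := by
        rw [Finset.sum_insert hmCS, ← hm_def] at *
        calc m + (∑ v ∈ C \ S, v)
            = (∑ v ∈ C \ S, v) + m := add_comm _ _
          _ = one := by rw [← hCsum, ← hsd]
      have hsub : insert m (C \ S) ⊆ M := by
        intro x hx
        rcases Finset.mem_insert.mp hx with h | h
        · rwa [h]
        · exact hCM (Finset.sdiff_subset h)
      have hle := hmin _ hsub hsum'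
      have hcard1 : (insert m (C \ S)).card = (C \ S).card + 1 :=
        Finset.card_insert_of_notMem hmCS
      have hcard2 : (C \ S).card = C.card - S.card := Finset.card_sdiff_of_subset hS
      have hSle : S.card ≤ C.card := Finset.card_le_card hS
      omega
  -- every coordinate is covered by some element of C
  have hcover : (Finset.univ : Finset (Fin n)) ⊆
      C.biUnion (fun v => Finset.univ.filter (fun i => v i ≠ 0)) := by
    intro i _
    have h1 : (∑ v ∈ C, v) i = 1 := by rw [hCsum]
    rw [Finset.sum_apply] at h1
    by_contra hcon
    simp only [Finset.mem_biUnion, Finset.mem_filter, Finset.mem_univ, true_and,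
      not_exists, not_and, not_not] at hcon
    have : (∑ v ∈ C, v i) = 0 := Finset.sum_eq_zero (fun v hv => hcon v hv)
    rw [this] at h1
    exact one_ne_zero h1.symm
  -- counting: n ≤ C.card * r
  have hcount : n ≤ C.card * r := by
    calc n = (Finset.univ : Finset (Fin n)).card := by simp
      _ ≤ (C.biUnion (fun v => Finset.univ.filter (fun i => v i ≠ 0))).card :=
          Finset.card_le_card hcover
      _ ≤ ∑ v ∈ C, (Finset.univ.filter (fun i => v i ≠ 0)).card :=
          Finset.card_biUnion_le
      _ ≤ ∑ _v ∈ C, r := Finset.sum_le_sum (fun v hv => hr v (hCM hv))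
      _ = C.card * r := by rw [Finset.sum_const, smul_eq_mul]
  have hkC : k ≤ C.card := by
    by_contra hcon
    push_neg at hcon
    have h1 : C.card ≤ k - 1 := by omega
    have h2 : C.card * r ≤ (k - 1) * r := Nat.mul_le_mul_right r h1
    have h3 : (k - 1) * r = r * (k - 1) := Nat.mul_comm _ _
    omega
  obtain ⟨K, hKC, hKcard⟩ := Finset.exists_subset_card_eq hkC
  exact ⟨K, hKC.trans hCM, hKcard,
    fun K' hK' h2 => hfree K' (hK'.trans hKC) h2⟩
end

section
/- Let M be a set of vectors in F_2^n such that M contains a basis of F_2^n, the zero vector is in M, and |M| < 2^n. If k is a positive integer with k+1 <= |M| <= 2^(n/k), then there exists an M-sum-free subset K of M with |K| >= k+1. -/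
/-!
Since `M` spans `F₂ⁿ`, every vector is the sum of some subset of `M`. Choose a vector `x` that is
not a sum of at most `k` elements of `M`: padding with `0`, these sums are sums of `k`-tuples, so
there are at most `|M|^k ≤ 2^n` of them, with strict inequality because `|M| < 2^n` when `k = 1`
and `a + a = 0 + 0` when `k ≥ 2`. A subset `K ⊆ M` of least size with sum `x` then
has more than `k` elements, and it is `M`-sum-free: if `K' ⊆ K` with `|K'| ≥ 2` had sum `m ∈ M`,
replacing `K'` by `m` (or cancelling `m` if it already lies in `K \ K'`) would represent `x` by a
smaller subset of `M`.
-/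

open Finset

variable {V : Type*}

def IsSumFreeIn (M K : Finset V) [AddCommMonoid V] : Prop :=
  ∀ K' ⊆ K, 2 ≤ K'.card → ∑ v ∈ K', v ∉ M

section TupleSums

variable [AddCommMonoid V] [DecidableEq V]

def tupleSums (M : Finset V) (k : ℕ) : Finset V :=
  (univ : Finset (Fin k → M)).image fun f => ∑ i, (f i : V)

theorem card_tupleSums_le (M : Finset V) (k : ℕ) : (tupleSums M k).card ≤ M.card ^ k :=
  card_image_le.trans (by simp)

theorem sum_mem_tupleSums {M : Finset V} (h0 : 0 ∈ M) :
    ∀ {k : ℕ} {K : Finset V}, K ⊆ M → K.card ≤ k → ∑ v ∈ K, v ∈ tupleSums M k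
  | 0, K, _, hK => by
    rw [card_eq_zero.mp (Nat.le_zero.mp hK)]
    exact mem_image.mpr ⟨Fin.elim0, mem_univ _, by simp⟩
  | k + 1, K, hKM, hK => by
    rcases K.eq_empty_or_nonempty with rfl | ⟨a, ha⟩
    · exact mem_image.mpr ⟨fun _ => ⟨0, h0⟩, mem_univ _, by simp⟩
    · obtain ⟨f, -, hf⟩ := mem_image.mp <| sum_mem_tupleSums h0 (k := k)
        ((K.erase_subset a).trans hKM) (by rw [card_erase_of_mem ha]; omega)
      refine mem_image.mpr ⟨Fin.cons ⟨a, hKM ha⟩ f, mem_univ _, ?_⟩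
      rw [Fin.sum_univ_succ, ← add_sum_erase K _ ha]
      simp only [Fin.cons_zero, Fin.cons_succ, hf]

end TupleSums

section CharTwo

variable [AddCommGroup V] [Module (ZMod 2) V]

theorem add_self_eq_zero_of_zmod_two (a : V) : a + a = 0 := by
  rw [← two_smul (ZMod 2) a, show (2 : ZMod 2) = 0 from rfl, zero_smul]

theorem card_tupleSums_lt [DecidableEq V] {M : Finset V} {k : ℕ} (h0 : 0 ∈ M)
    (hM : 2 ≤ M.card) (hk : 2 ≤ k) : (tupleSums M k).card < M.card ^ k := by
  obtain ⟨a, haM, ha0⟩ := exists_mem_ne (by omega : 1 < M.card) 0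
  have : Nontrivial (Fin k) := Fin.nontrivial_iff_two_le.mpr hk
  obtain ⟨i, j, hij⟩ := exists_pair_ne (Fin k)
  let zero : Fin k → M := fun _ => ⟨0, h0⟩
  let pair : Fin k → M := fun l => if l ∈ ({i, j} : Finset (Fin k)) then ⟨a, haM⟩ else ⟨0, h0⟩
  have hne : zero ≠ pair := fun h => ha0 <| by
    simpa [zero, pair] using (congrArg Subtype.val (congrFun h i)).symm
  have hsum : ∑ l, (zero l : V) = ∑ l, (pair l : V) := by
    simp only [zero, pair, apply_ite Subtype.val, sum_ite_mem, univ_inter, sum_const,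
      card_pair hij, two_nsmul, add_self_eq_zero_of_zmod_two, smul_zero]
  calc (tupleSums M k).card < (univ : Finset (Fin k → M)).card :=
        lt_of_le_of_ne card_image_le fun h =>
          hne (card_image_iff.mp h (mem_coe.2 (mem_univ _)) (mem_coe.2 (mem_univ _)) hsum)
    _ = M.card ^ k := by simp

theorem exists_subset_sum_eq_of_mem_span {M : Finset V} {x : V}
    (hx : x ∈ Submodule.span (ZMod 2) (M : Set V)) : ∃ K ⊆ M, ∑ v ∈ K, v = x := by
  classical
  obtain ⟨c, -, hc⟩ := Submodule.mem_span_finset.mp hx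
  refine ⟨M.filter (c · = 1), filter_subset _ _, ?_⟩
  rw [← hc, sum_filter]
  refine sum_congr rfl fun v _ => ?_
  rcases (by decide : ∀ a : ZMod 2, a = 0 ∨ a = 1) (c v) with h | h <;> simp [h]

theorem exists_subset_insert_sum_eq_add [DecidableEq V] (A : Finset V) (m : V) :
    ∃ L ⊆ insert m A, L.card ≤ A.card + 1 ∧ ∑ v ∈ L, v = ∑ v ∈ A, v + m := by
  by_cases hm : m ∈ A
  · refine ⟨A.erase m, (erase_subset m A).trans (subset_insert m A), (card_erase_le).trans
      (Nat.le_succ _), ?_⟩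
    rw [← add_sum_erase A _ hm, add_comm m, add_assoc, add_self_eq_zero_of_zmod_two, add_zero]
  · exact ⟨insert m A, Subset.rfl, (card_insert_le m A), by rw [sum_insert hm, add_comm]⟩

theorem isSumFreeIn_of_forall_card_le [DecidableEq V] {M K : Finset V} (hKM : K ⊆ M)
    (hmin : ∀ L ⊆ M, ∑ v ∈ L, v = ∑ v ∈ K, v → K.card ≤ L.card) : IsSumFreeIn M K := by
  intro K' hK' hK'2 hm
  obtain ⟨L, hL, hLcard, hLsum⟩ := exists_subset_insert_sum_eq_add (K \ K') (∑ v ∈ K', v)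
  have hLM : L ⊆ M := hL.trans (insert_subset hm (sdiff_subset.trans hKM))
  have := hmin L hLM (by rw [hLsum, sum_sdiff hK'])
  have := card_sdiff_of_subset hK'
  have := card_le_card hK'
  omega

theorem exists_isSumFreeIn_sum_eq [DecidableEq V] {M : Finset V} {x : V}
    (hx : x ∈ Submodule.span (ZMod 2) (M : Set V)) :
    ∃ K ⊆ M, ∑ v ∈ K, v = x ∧ IsSumFreeIn M K := by
  obtain ⟨K₀, hK₀M, hK₀x⟩ := exists_subset_sum_eq_of_mem_span hx
  obtain ⟨K, hK, hmin⟩ := exists_min_image (M.powerset.filter (∑ v ∈ ·, v = x)) card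
    ⟨K₀, mem_filter.mpr ⟨mem_powerset.mpr hK₀M, hK₀x⟩⟩
  obtain ⟨hKM, hKx⟩ := mem_filter.mp hK
  refine ⟨K, mem_powerset.mp hKM, hKx, isSumFreeIn_of_forall_card_le (mem_powerset.mp hKM) ?_⟩
  exact fun L hLM hLx => hmin L (mem_filter.mpr ⟨mem_powerset.mpr hLM, hLx.trans hKx⟩)

end CharTwo

theorem pow_le_pow_of_le_rpow_div {m b n k : ℕ} (hk : k ≠ 0)
    (h : (m : ℝ) ≤ (b : ℝ) ^ ((n : ℝ) / k)) : m ^ k ≤ b ^ n := by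
  have := pow_le_pow_left₀ (Nat.cast_nonneg m) h k
  rw [← Real.rpow_natCast (_ ^ _) k, ← Real.rpow_mul (Nat.cast_nonneg b),
    div_mul_cancel₀ _ (Nat.cast_ne_zero.mpr hk), Real.rpow_natCast] at this
  exact_mod_cast this

theorem stmt11 (n k : ℕ) (M : Finset (Fin n → ZMod 2))
    (hspan : Submodule.span (ZMod 2) (M : Set (Fin n → ZMod 2)) = ⊤)
    (hzero : (0 : Fin n → ZMod 2) ∈ M)
    (hlt : M.card < 2 ^ n)
    (hk : 1 ≤ k)
    (hlow : k + 1 ≤ M.card)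
    (hup : (M.card : ℝ) ≤ 2 ^ ((n : ℝ) / k)) :
    ∃ K ⊆ M, k + 1 ≤ K.card ∧ ∀ K' ⊆ K, 2 ≤ K'.card → (∑ v ∈ K', v) ∉ M := by
  classical
  have hsums : (tupleSums M k).card < 2 ^ n := by
    obtain rfl | hk2 : k = 1 ∨ 2 ≤ k := by omega
    · exact (card_tupleSums_le M 1).trans_lt (by rwa [pow_one])
    · exact (card_tupleSums_lt hzero (by omega) hk2).trans_le
        (pow_le_pow_of_le_rpow_div (by omega) (by exact_mod_cast hup))
  obtain ⟨x, -, hx⟩ := exists_mem_notMem_of_card_lt_card (s := tupleSums M k)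
    (t := univ) (by simpa using hsums)
  obtain ⟨K, hKM, rfl, hfree⟩ := exists_isSumFreeIn_sum_eq (hspan ▸ Submodule.mem_top (x := x))
  refine ⟨K, hKM, ?_, hfree⟩
  by_contra! hK
  exact hx (sum_mem_tupleSums hzero hKM (by omega))
end

section
/- Let S be a system of m weighted linear equations over F_2 in variables x_1,...,x_n (in multiplicative form, variables taking values in {-1,1}), with no two equations on the same variable set, and suppose every equation has an odd number of variables. Define the excess epsilon(x) = sum_I w_I * (-1)^{b_I} * prod_{i in I} x_i. If m >= 4k^2 then there exists an assignment x in {-1,1}^n with epsilon(x) >= 2k. -/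
noncomputable def sgn13 (b : Bool) : ℝ := if b then 1 else -1

lemma sgn13_not (b : Bool) : sgn13 (!b) = - sgn13 b := by cases b <;> simp [sgn13]

lemma sgn13_mul_self (b : Bool) : sgn13 b * sgn13 b = 1 := by cases b <;> norm_num [sgn13]

lemma chi_mul13 {n : ℕ} (I J : Finset (Fin n)) (x : Fin n → Bool) :
    (∏ i ∈ I, sgn13 (x i)) * ∏ i ∈ J, sgn13 (x i) = ∏ i ∈ (symmDiff I J), sgn13 (x i) := by
  calc (∏ i ∈ I, sgn13 (x i)) * ∏ i ∈ J, sgn13 (x i)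
      = ((∏ i ∈ I \ J, sgn13 (x i)) * ∏ i ∈ I ∩ J, sgn13 (x i)) *
        ((∏ i ∈ J \ I, sgn13 (x i)) * ∏ i ∈ J ∩ I, sgn13 (x i)) := by
        rw [← Finset.prod_union (Finset.disjoint_sdiff_inter I J),
            ← Finset.prod_union (Finset.disjoint_sdiff_inter J I),
            Finset.sdiff_union_inter, Finset.sdiff_union_inter]
    _ = ((∏ i ∈ I \ J, sgn13 (x i)) * ∏ i ∈ J \ I, sgn13 (x i)) *
        ∏ i ∈ I ∩ J, (sgn13 (x i) * sgn13 (x i)) := by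
        rw [Finset.prod_mul_distrib, Finset.inter_comm J I]; ring
    _ = (∏ i ∈ I \ J, sgn13 (x i)) * ∏ i ∈ J \ I, sgn13 (x i) := by
        simp [sgn13_mul_self]
    _ = ∏ i ∈ symmDiff I J, sgn13 (x i) := by
        rw [← Finset.prod_union disjoint_sdiff_sdiff, symmDiff_def]; rfl

lemma sum_chi_zero13 {n : ℕ} {S : Finset (Fin n)} (hS : S.Nonempty) :
    ∑ x : Fin n → Bool, ∏ i ∈ S, sgn13 (x i) = 0 := by
  obtain ⟨j, hj⟩ := hS
  have hinv : Function.Involutive (fun x : Fin n → Bool => Function.update x j (!x j)) := by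
    intro x; funext i
    by_cases h : i = j
    · subst h; simp
    · simp [Function.update_of_ne h]
  set e := hinv.toPerm with he
  have hxj : ∀ x : Fin n → Bool, e x j = !x j := by
    intro x; simp [he, Function.Involutive.toPerm]
  have hxi : ∀ (x : Fin n → Bool) (i : Fin n), i ≠ j → e x i = x i := by
    intro x i hi; simp [he, Function.Involutive.toPerm, Function.update_of_ne hi]
  have h1 : ∀ x : Fin n → Bool, (∏ i ∈ S, sgn13 (e x i)) = - ∏ i ∈ S, sgn13 (x i) := by
    intro x
    rw [← Finset.mul_prod_erase S (fun i => sgn13 (e x i)) hj,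
        ← Finset.mul_prod_erase S (fun i => sgn13 (x i)) hj]
    have hcong : ∀ i ∈ S.erase j, sgn13 (e x i) = sgn13 (x i) := by
      intro i hi
      rw [hxi x i (Finset.ne_of_mem_erase hi)]
    rw [Finset.prod_congr rfl hcong, hxj x, sgn13_not, neg_mul]
  have h2 := Equiv.sum_comp e (fun x : Fin n → Bool => ∏ i ∈ S, sgn13 (x i))
  simp only [h1] at h2
  rw [Finset.sum_neg_distrib] at h2
  linarith

theorem stmt13 (n k : ℕ) (F : Finset (Finset (Fin n)))
    (w : Finset (Fin n) → ℕ) (s : Finset (Fin n) → Bool)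
    (hodd : ∀ I ∈ F, Odd I.card)
    (hw : ∀ I ∈ F, 1 ≤ w I)
    (hm : 4 * k ^ 2 ≤ F.card) :
    ∃ x : Fin n → Bool,
      (2 * k : ℝ) ≤ ∑ I ∈ F,
        (w I : ℝ) * (if s I then 1 else -1) * ∏ i ∈ I, (if x i then (1 : ℝ) else -1) := by
  set c : Finset (Fin n) → ℝ := fun I => (w I : ℝ) * (if s I then 1 else -1) with hc
  set f : (Fin n → Bool) → ℝ := fun x => ∑ I ∈ F, c I * ∏ i ∈ I, sgn13 (x i) with hf
  have hgoal : ∀ x : Fin n → Bool,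
      (∑ I ∈ F, (w I : ℝ) * (if s I then 1 else -1) * ∏ i ∈ I, (if x i then (1 : ℝ) else -1))
        = f x := by
    intro x
    simp only [hf, hc, sgn13]
  -- key identity: sum over all x of f x ^ 2 equals 2^n * sum of c I ^ 2
  have key : ∑ x : Fin n → Bool, (f x) ^ 2 = (2 ^ n : ℝ) * ∑ I ∈ F, (c I) ^ 2 := by
    have expand : ∀ x : Fin n → Bool,
        (f x) ^ 2 = ∑ I ∈ F, ∑ J ∈ F, c I * c J * ∏ i ∈ (symmDiff I J), sgn13 (x i) := by
      intro x
      rw [hf, sq, Finset.sum_mul_sum]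
      refine Finset.sum_congr rfl fun I _ => Finset.sum_congr rfl fun J _ => ?_
      rw [← chi_mul13]; ring
    simp_rw [expand]
    rw [Finset.sum_comm]
    have inner : ∀ I ∈ F,
        (∑ x : Fin n → Bool, ∑ J ∈ F, c I * c J * ∏ i ∈ (symmDiff I J), sgn13 (x i))
          = (2 ^ n : ℝ) * (c I) ^ 2 := by
      intro I hI
      rw [Finset.sum_comm]
      rw [Finset.sum_eq_single_of_mem I hI]
      · have : symmDiff I I = (∅ : Finset (Fin n)) := by simp
        simp only [this, Finset.prod_empty, mul_one, Finset.sum_const, Finset.card_univ]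
        have hcard : Fintype.card (Fin n → Bool) = 2 ^ n := by
          simp [Fintype.card_fun]
        rw [hcard, nsmul_eq_mul]
        push_cast
        ring
      · intro J hJ hne
        have hne' : symmDiff I J ≠ ∅ := by
          intro h
          exact hne (symmDiff_eq_bot.mp h).symm
        have hne2 : (symmDiff I J).Nonempty := Finset.nonempty_iff_ne_empty.mpr hne'
        rw [← Finset.mul_sum, sum_chi_zero13 hne2, mul_zero]
    rw [Finset.sum_congr rfl inner, ← Finset.mul_sum]
  -- lower bound on sum of c I ^ 2
  have hc2 : ∀ I ∈ F, (1 : ℝ) ≤ (c I) ^ 2 := by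
    intro I hI
    have hcI : (c I) ^ 2 = (w I : ℝ) ^ 2 := by
      rw [hc]; by_cases h : s I <;> simp [h]
    rw [hcI]
    have h1 : (1 : ℝ) ≤ (w I : ℝ) := by exact_mod_cast hw I hI
    nlinarith
  have hsum : (F.card : ℝ) ≤ ∑ I ∈ F, (c I) ^ 2 := by
    calc (F.card : ℝ) = ∑ _I ∈ F, (1 : ℝ) := by simp
      _ ≤ _ := Finset.sum_le_sum hc2
  have hm' : ((2 * k : ℝ)) ^ 2 ≤ (F.card : ℝ) := by
    have : ((4 * k ^ 2 : ℕ) : ℝ) ≤ (F.card : ℝ) := by exact_mod_cast hm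
    push_cast at this
    nlinarith
  have hbound : (2 ^ n : ℝ) * (2 * k : ℝ) ^ 2 ≤ ∑ x : Fin n → Bool, (f x) ^ 2 := by
    rw [key]
    have h2n : (0 : ℝ) ≤ (2 ^ n : ℝ) := by positivity
    nlinarith
  -- there is x with large f x ^ 2
  have hex : ∃ x : Fin n → Bool, (2 * k : ℝ) ^ 2 ≤ (f x) ^ 2 := by
    by_contra h
    push_neg at h
    have hlt : ∑ x : Fin n → Bool, (f x) ^ 2 < ∑ _x : Fin n → Bool, (2 * k : ℝ) ^ 2 :=
      Finset.sum_lt_sum_of_nonempty Finset.univ_nonempty (fun x _ => h x)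
    rw [Finset.sum_const, Finset.card_univ] at hlt
    have hcard : Fintype.card (Fin n → Bool) = 2 ^ n := by simp [Fintype.card_fun]
    rw [hcard, nsmul_eq_mul] at hlt
    push_cast at hlt
    linarith
  obtain ⟨x, hx⟩ := hex
  have habs : (2 * k : ℝ) ≤ |f x| := by
    by_contra h
    push_neg at h
    have h0 : (0 : ℝ) ≤ (2 * k : ℝ) := by positivity
    nlinarith [sq_abs (f x), abs_nonneg (f x)]
  rcases le_or_gt 0 (f x) with hpos | hneg
  · refine ⟨x, ?_⟩
    rw [hgoal x]
    rw [abs_of_nonneg hpos] at habs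
    exact habs
  · refine ⟨fun i => !x i, ?_⟩
    rw [hgoal (fun i => !x i)]
    have hflip : f (fun i => !x i) = - f x := by
      rw [hf, ← Finset.sum_neg_distrib]
      refine Finset.sum_congr rfl fun I hI => ?_
      have hp : ∏ i ∈ I, sgn13 (!x i) = - ∏ i ∈ I, sgn13 (x i) := by
        have : ∀ i ∈ I, sgn13 (!x i) = (-1) * sgn13 (x i) := by
          intro i _; rw [sgn13_not]; ring
        rw [Finset.prod_congr rfl this, Finset.prod_mul_distrib, Finset.prod_const,
          (hodd I hI).neg_one_pow]
        ring
      rw [hp]; ring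
    rw [hflip]
    rw [abs_of_neg hneg] at habs
    exact habs
end

section
/- Let D = (V,A) be an oriented graph (digraph with no loops, no parallel arcs, and no directed 2-cycles) with positive arc weights w_ij. For a uniformly random bijection alpha: V -> [n], define X(alpha) = (1/2) * sum_{ij in A} x_ij(alpha), where x_ij(alpha) = w_ij if alpha(i) < alpha(j) and -w_ij otherwise. Then E[X^2] >= W2/12, where W2 = sum_{ij in A} w_ij^2. -/
open Finset

noncomputable def sg {n : ℕ} (α : Equiv.Perm (Fin n)) (a b : Fin n) : ℝ :=
  if α a < α b then 1 else -1

lemma sg_swap {n : ℕ} (α : Equiv.Perm (Fin n)) {a b : Fin n} (h : a ≠ b) :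
    sg α b a = - sg α a b := by
  have hne : α a ≠ α b := fun hh => h (α.injective hh)
  rcases lt_or_gt_of_ne hne with h1 | h1 <;>
    simp [sg, h1, asymm h1, h1.not_gt]

lemma sg_cyclic {n : ℕ} (α : Equiv.Perm (Fin n)) {a b c : Fin n}
    (hab : a ≠ b) (hac : a ≠ c) (hbc : b ≠ c) :
    sg α a b * sg α a c + sg α b c * sg α b a + sg α c a * sg α c b = 1 := by
  have hxy : α a ≠ α b := fun h => hab (α.injective h)
  have hxz : α a ≠ α c := fun h => hac (α.injective h)
  have hyz : α b ≠ α c := fun h => hbc (α.injective h)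
  unfold sg
  rcases lt_or_gt_of_ne hxy with h1 | h1 <;>
    rcases lt_or_gt_of_ne hxz with h2 | h2 <;>
      rcases lt_or_gt_of_ne hyz with h3 | h3
  all_goals
    first
      | exact absurd (h1.trans h3) (lt_asymm h2)
      | exact absurd (h2.trans h3) (lt_asymm h1)
      | simp [h1, h2, h3, asymm h1, asymm h2, asymm h3, h1.not_gt, h2.not_gt, h3.not_gt]

lemma perm_reindex {n : ℕ} (τ : Equiv.Perm (Fin n)) (G : Equiv.Perm (Fin n) → ℝ) :
    ∑ α : Equiv.Perm (Fin n), G α = ∑ α : Equiv.Perm (Fin n), G (α * τ) :=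
  (Fintype.sum_equiv (Equiv.mulRight τ) (fun α => G (α * τ)) G (fun _ => rfl)).symm

lemma sum_sg_tail {n : ℕ} {a b c : Fin n} (hab : a ≠ b) (hac : a ≠ c) (hbc : b ≠ c) :
    ∑ α : Equiv.Perm (Fin n), sg α a b * sg α a c = (Nat.factorial n : ℝ) / 3 := by
  set τ : Equiv.Perm (Fin n) := Equiv.swap a b * Equiv.swap b c with hτ
  have hτa : τ a = b := by
    simp [hτ, Equiv.swap_apply_of_ne_of_ne hab hac]
  have hτb : τ b = c := by
    simp [hτ, Equiv.swap_apply_of_ne_of_ne (Ne.symm hac) (Ne.symm hbc)]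
  have hτc : τ c = a := by
    simp [hτ]
  have e1 : ∑ α : Equiv.Perm (Fin n), sg α a b * sg α a c
      = ∑ α : Equiv.Perm (Fin n), sg α b c * sg α b a := by
    rw [perm_reindex τ (fun α => sg α a b * sg α a c)]
    refine Finset.sum_congr rfl fun α _ => ?_
    simp [sg, Equiv.Perm.mul_apply, hτa, hτb, hτc]
  have e2 : ∑ α : Equiv.Perm (Fin n), sg α b c * sg α b a
      = ∑ α : Equiv.Perm (Fin n), sg α c a * sg α c b := by
    rw [perm_reindex τ (fun α => sg α b c * sg α b a)]
    refine Finset.sum_congr rfl fun α _ => ?_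
    simp [sg, Equiv.Perm.mul_apply, hτa, hτb, hτc]
  have e3 : ∑ α : Equiv.Perm (Fin n),
      (sg α a b * sg α a c + sg α b c * sg α b a + sg α c a * sg α c b)
        = (Nat.factorial n : ℝ) := by
    rw [Finset.sum_congr rfl fun α _ => sg_cyclic α hab hac hbc]
    simp [Finset.card_univ, Fintype.card_perm]
  rw [Finset.sum_add_distrib, Finset.sum_add_distrib] at e3
  rw [← e1, ← e2] at e3
  linarith

lemma sum_sg_disjoint {n : ℕ} {a b c d : Fin n} (hab : a ≠ b)
    (hca : c ≠ a) (hcb : c ≠ b) (hda : d ≠ a) (hdb : d ≠ b) :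
    ∑ α : Equiv.Perm (Fin n), sg α a b * sg α c d = 0 := by
  have key : ∑ α : Equiv.Perm (Fin n), sg α a b * sg α c d
      = - ∑ α : Equiv.Perm (Fin n), sg α a b * sg α c d := by
    nth_rewrite 1 [perm_reindex (Equiv.swap a b) (fun α => sg α a b * sg α c d)]
    rw [← Finset.sum_neg_distrib]
    refine Finset.sum_congr rfl fun α _ => ?_
    have h1 : (Equiv.swap a b) a = b := Equiv.swap_apply_left a b
    have h2 : (Equiv.swap a b) b = a := Equiv.swap_apply_right a b
    have h3 : (Equiv.swap a b) c = c := Equiv.swap_apply_of_ne_of_ne hca hcb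
    have h4 : (Equiv.swap a b) d = d := Equiv.swap_apply_of_ne_of_ne hda hdb
    have ea : sg (α * Equiv.swap a b) a b = sg α b a := by
      simp [sg, Equiv.Perm.mul_apply, h1, h2]
    have eb : sg (α * Equiv.swap a b) c d = sg α c d := by
      simp [sg, Equiv.Perm.mul_apply, h3, h4]
    rw [ea, eb, sg_swap α hab]
    ring
  linarith

lemma sum_sg_pair {n : ℕ} (e f : Fin n × Fin n) (he : e.1 ≠ e.2) (hf : f.1 ≠ f.2)
    (h2 : ¬ (f.1 = e.2 ∧ f.2 = e.1)) :
    ∑ α : Equiv.Perm (Fin n), sg α e.1 e.2 * sg α f.1 f.2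
      = (Nat.factorial n : ℝ) / 3 *
          (((if e.1 = f.1 then (1 : ℝ) else 0) + (if e.2 = f.2 then 1 else 0)
            - (if e.1 = f.2 then 1 else 0) - (if e.2 = f.1 then 1 else 0))
            + (if e = f then 1 else 0)) := by
  obtain ⟨a, b⟩ := e
  obtain ⟨c, d⟩ := f
  by_cases hac : a = c
  · subst hac
    by_cases hbd : b = d
    · subst hbd
      have hpt : ∀ α : Equiv.Perm (Fin n), sg α a b * sg α a b = 1 := by
        intro α; unfold sg; split <;> norm_num
      rw [Finset.sum_congr rfl fun α _ => hpt α]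
      have h1 : ¬ (b = a) := fun h => he h.symm
      simp [Finset.card_univ, Fintype.card_perm, he, h1]
      try ring
    · -- share tail, f = (a, d)
      rw [sum_sg_tail he hf hbd]
      have h1 : ¬ (b = a) := fun h => he h.symm
      have h2 : ¬ (a = d) := hf
      have hne : ¬ ((a, b) = (a, d)) := by simp [hbd]
      simp [h1, h2, hbd, hne]
  · by_cases hbd : b = d
    · subst hbd
      -- share head: f = (c, b)
      have hbc : b ≠ c := fun h => hf h.symm
      have e1 : ∑ α : Equiv.Perm (Fin n), sg α a b * sg α c b
          = ∑ α : Equiv.Perm (Fin n), sg α b a * sg α b c := by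
        refine Finset.sum_congr rfl fun α _ => ?_
        rw [sg_swap α he, sg_swap α (Ne.symm hbc)]
        ring
      rw [e1, sum_sg_tail (Ne.symm he) hbc hac]
      have h1 : ¬ (a = b) := he
      have h3 : ¬ (b = c) := hbc
      have hne : ¬ ((a, b) = (c, b)) := by simp [hac]
      simp [hac, h1, h3, hne]
    · by_cases had : a = d
      · subst had
        -- f = (c, a), with b ≠ c from h2
        have hbc : ¬ (b = c) := fun h => h2 ⟨h.symm, rfl⟩
        have e1 : ∑ α : Equiv.Perm (Fin n), sg α a b * sg α c a
            = ∑ α : Equiv.Perm (Fin n), -(sg α a b * sg α a c) := by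
          refine Finset.sum_congr rfl fun α _ => ?_
          rw [sg_swap α hac]
          ring
        rw [e1, Finset.sum_neg_distrib, sum_sg_tail he hac hbc]
        have h1 : ¬ (b = a) := fun h => he h.symm
        have hne : ¬ ((a, b) = (c, a)) := by simp [hac]
        simp [hac, hbc, h1, hne]
        try ring
      · by_cases hbc : b = c
        · subst hbc
          -- path: f = (b, d)
          have e1 : ∑ α : Equiv.Perm (Fin n), sg α a b * sg α b d
              = ∑ α : Equiv.Perm (Fin n), -(sg α b a * sg α b d) := by
            refine Finset.sum_congr rfl fun α _ => ?_
            rw [sg_swap α he]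
            ring
          rw [e1, Finset.sum_neg_distrib, sum_sg_tail (Ne.symm he) hf had]
          have h1 : ¬ (a = b) := he
          have hne : ¬ ((a, b) = (b, d)) := by simp [hac]
          simp [hac, had, h1, hne, hbd]
          try ring
        · -- all four distinct
          rw [sum_sg_disjoint he (fun h => hac h.symm) (fun h => hbc h.symm)
            (fun h => had h.symm) (fun h => hbd h.symm)]
          have hne : ¬ ((a, b) = (c, d)) := by simp [hac]
          simp [hac, hbd, had, hbc, hne]

noncomputable def Mind {n : ℕ} (e f : Fin n × Fin n) : ℝ :=
  (((if e.1 = f.1 then (1 : ℝ) else 0) + (if e.2 = f.2 then 1 else 0)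
    - (if e.1 = f.2 then 1 else 0) - (if e.2 = f.1 then 1 else 0))
    + (if e = f then 1 else 0))

lemma ind_sum {n : ℕ} (p q : Fin n) :
    ∑ v : Fin n, (if p = v then (1:ℝ) else 0) * (if q = v then 1 else 0)
      = if p = q then 1 else 0 := by
  simp only [ite_mul, one_mul, zero_mul, Finset.sum_ite_eq, Finset.mem_univ, if_true]
  simp [eq_comm]

lemma vertex_key {n : ℕ} (e f : Fin n × Fin n) :
    ∑ v : Fin n, ((if e.1 = v then (1:ℝ) else 0) - (if e.2 = v then 1 else 0))
        * ((if f.1 = v then 1 else 0) - (if f.2 = v then 1 else 0))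
      = (if e.1 = f.1 then (1 : ℝ) else 0) + (if e.2 = f.2 then 1 else 0)
        - (if e.1 = f.2 then 1 else 0) - (if e.2 = f.1 then 1 else 0) := by
  have expand : ∀ v : Fin n,
      ((if e.1 = v then (1:ℝ) else 0) - (if e.2 = v then 1 else 0))
        * ((if f.1 = v then 1 else 0) - (if f.2 = v then 1 else 0))
      = ((if e.1 = v then (1:ℝ) else 0) * (if f.1 = v then 1 else 0)
          + (if e.2 = v then (1:ℝ) else 0) * (if f.2 = v then 1 else 0))
        - ((if e.1 = v then (1:ℝ) else 0) * (if f.2 = v then 1 else 0)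
          + (if e.2 = v then (1:ℝ) else 0) * (if f.1 = v then 1 else 0)) := by
    intro v; ring
  rw [Finset.sum_congr rfl fun v _ => expand v, Finset.sum_sub_distrib,
    Finset.sum_add_distrib, Finset.sum_add_distrib,
    ind_sum e.1 f.1, ind_sum e.2 f.2, ind_sum e.1 f.2, ind_sum e.2 f.1]
  ring

lemma double_to_sq {ι κ : Type*} [Fintype κ] (A : Finset ι) (g : ι → κ → ℝ) :
    ∑ e ∈ A, ∑ f ∈ A, ∑ v : κ, g e v * g f v = ∑ v : κ, (∑ e ∈ A, g e v) ^ 2 := by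
  rw [Finset.sum_congr rfl fun e _ => Finset.sum_comm, Finset.sum_comm]
  exact Finset.sum_congr rfl fun v _ => by rw [sq, Finset.sum_mul_sum]

lemma Mind_sum {n : ℕ} (A : Finset (Fin n × Fin n)) (w : Fin n × Fin n → ℝ) :
    ∑ e ∈ A, ∑ f ∈ A, (w e * w f) * Mind e f
      = (∑ v : Fin n, (∑ e ∈ A, w e *
          ((if e.1 = v then (1:ℝ) else 0) - (if e.2 = v then 1 else 0))) ^ 2)
        + ∑ e ∈ A, (w e) ^ 2 := by
  classical
  have split : ∀ e ∈ A, ∀ f ∈ A, (w e * w f) * Mind e f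
      = (∑ v : Fin n, (w e * ((if e.1 = v then (1:ℝ) else 0) - (if e.2 = v then 1 else 0)))
          * (w f * ((if f.1 = v then (1:ℝ) else 0) - (if f.2 = v then 1 else 0))))
        + (if e = f then w e * w f else 0) := by
    intro e _ f _
    have : ∑ v : Fin n, (w e * ((if e.1 = v then (1:ℝ) else 0) - (if e.2 = v then 1 else 0)))
          * (w f * ((if f.1 = v then (1:ℝ) else 0) - (if f.2 = v then 1 else 0)))
        = (w e * w f) * ∑ v : Fin n,
            ((if e.1 = v then (1:ℝ) else 0) - (if e.2 = v then 1 else 0))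
              * ((if f.1 = v then (1:ℝ) else 0) - (if f.2 = v then 1 else 0)) := by
      rw [Finset.mul_sum]
      exact Finset.sum_congr rfl fun v _ => by ring
    rw [this, vertex_key]
    unfold Mind
    by_cases h : e = f <;> simp [h] <;> ring
  rw [Finset.sum_congr rfl fun e he => Finset.sum_congr rfl fun f hf => split e he f hf]
  have step2 : ∑ e ∈ A, ∑ f ∈ A,
      ((∑ v : Fin n, (w e * ((if e.1 = v then (1:ℝ) else 0) - (if e.2 = v then 1 else 0)))
          * (w f * ((if f.1 = v then (1:ℝ) else 0) - (if f.2 = v then 1 else 0))))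
        + (if e = f then w e * w f else 0))
      = (∑ e ∈ A, ∑ f ∈ A, ∑ v : Fin n,
          (w e * ((if e.1 = v then (1:ℝ) else 0) - (if e.2 = v then 1 else 0)))
            * (w f * ((if f.1 = v then (1:ℝ) else 0) - (if f.2 = v then 1 else 0))))
        + ∑ e ∈ A, ∑ f ∈ A, (if e = f then w e * w f else 0) := by
    rw [← Finset.sum_add_distrib]
    exact Finset.sum_congr rfl fun e _ => by rw [← Finset.sum_add_distrib]
  rw [step2]
  congr 1
  · exact double_to_sq A (fun e v =>
      w e * ((if e.1 = v then (1:ℝ) else 0) - (if e.2 = v then 1 else 0)))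
  · refine Finset.sum_congr rfl fun e he => ?_
    rw [Finset.sum_ite_eq A e (fun f => w e * w f)]
    simp [he]
    ring

theorem stmt15 (n : ℕ) (A : Finset (Fin n × Fin n)) (w : Fin n × Fin n → ℝ)
    (hloop : ∀ e ∈ A, e.1 ≠ e.2)
    (h2cyc : ∀ e ∈ A, (e.2, e.1) ∉ A)
    (hw : ∀ e ∈ A, 0 < w e) :
    (∑ e ∈ A, (w e) ^ 2) / 12
      ≤ (1 / (Nat.factorial n : ℝ)) *
          ∑ α : Equiv.Perm (Fin n),
            ((1 / 2 : ℝ) * ∑ e ∈ A, (if α e.1 < α e.2 then w e else -w e)) ^ 2 := by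
  classical
  have hNpos : (0 : ℝ) < (Nat.factorial n : ℝ) := by
    exact_mod_cast Nat.factorial_pos n
  -- Step 1: rewrite each squared term as a double sum over pairs of arcs
  have hsq : ∀ α : Equiv.Perm (Fin n),
      ((1 / 2 : ℝ) * ∑ e ∈ A, (if α e.1 < α e.2 then w e else -w e)) ^ 2
        = (1/4 : ℝ) * ∑ e ∈ A, ∑ f ∈ A,
            (w e * w f) * (sg α e.1 e.2 * sg α f.1 f.2) := by
    intro α
    have h1 : ∀ e ∈ A, (if α e.1 < α e.2 then w e else -w e) = w e * sg α e.1 e.2 := by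
      intro e _; unfold sg; split <;> ring
    rw [Finset.sum_congr rfl h1, mul_pow, sq (∑ e ∈ A, w e * sg α e.1 e.2),
      Finset.sum_mul_sum]
    rw [Finset.sum_congr rfl fun e _ => Finset.sum_congr rfl fun f _ =>
      (by ring : (w e * sg α e.1 e.2) * (w f * sg α f.1 f.2)
        = (w e * w f) * (sg α e.1 e.2 * sg α f.1 f.2))]
    norm_num
  -- Step 2: swap sums and evaluate the inner permutation sums
  have hS : ∑ α : Equiv.Perm (Fin n),
      ((1 / 2 : ℝ) * ∑ e ∈ A, (if α e.1 < α e.2 then w e else -w e)) ^ 2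
        = (1/4 : ℝ) * ((Nat.factorial n : ℝ) / 3
            * ∑ e ∈ A, ∑ f ∈ A, (w e * w f) * Mind e f) := by
    rw [Finset.sum_congr rfl fun α _ => hsq α, ← Finset.mul_sum]
    congr 1
    rw [Finset.sum_comm, Finset.sum_congr rfl fun e _ => Finset.sum_comm]
    rw [Finset.mul_sum]
    refine Finset.sum_congr rfl fun e he => ?_
    rw [Finset.mul_sum]
    refine Finset.sum_congr rfl fun f hf => ?_
    have hkey : ∑ α : Equiv.Perm (Fin n), sg α e.1 e.2 * sg α f.1 f.2
        = (Nat.factorial n : ℝ) / 3 * Mind e f := by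
      refine sum_sg_pair e f (hloop e he) (hloop f hf) ?_
      rintro ⟨ha, hb⟩
      have : (e.2, e.1) = f := Prod.ext ha.symm hb.symm
      exact h2cyc e he (this ▸ hf)
    rw [← Finset.mul_sum, hkey]
    ring
  rw [hS, Mind_sum A w]
  set Q : ℝ := ∑ v : Fin n, (∑ e ∈ A, w e *
      ((if e.1 = v then (1:ℝ) else 0) - (if e.2 = v then 1 else 0))) ^ 2 with hQ
  have hQ0 : 0 ≤ Q := Finset.sum_nonneg fun v _ => sq_nonneg _
  set W2 : ℝ := ∑ e ∈ A, (w e) ^ 2 with hW2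
  have hcalc : (1 / (Nat.factorial n : ℝ)) *
      ((1/4 : ℝ) * ((Nat.factorial n : ℝ) / 3 * (Q + W2))) = (Q + W2) / 12 := by
    have hN' : (Nat.factorial n : ℝ) ≠ 0 := ne_of_gt hNpos
    field_simp
    ring_nf
  rw [hcalc]
  linarith
end
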